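/- arXiv:2504.20573 — 6 statements merged into one kernel-verified Lean document; each statement's English description precedes it below -/
import Mathlib

section
/- Let F be a minor-closed family of graphs in which every graph is d-degenerate. Then every graph in F is odd (2d+1)-colorable. -/
open SimpleGraph Finset
open scoped Classical

section Defs

variable {V : Type*}

/-- Degree of a vertex (classical, no decidability assumptions). -/
noncomputable def gdeg [Fintype V] (G : SimpleGraph V) (v : V) : ℕ :=
  (Finset.univ.filter fun u => G.Adj v u).card

/-- Number of neighbors of `v` receiving color `c` under `φ`. -/
noncomputable def colorCount [Fintype V] (G : SimpleGraph V) {α : Type*} (φ : V → α)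
    (v : V) (c : α) : ℕ :=
  (Finset.univ.filter fun u => G.Adj v u ∧ φ u = c).card

/-- `φ` is a proper coloring of `G`. -/
def ProperColoring (G : SimpleGraph V) {α : Type*} (φ : V → α) : Prop :=
  ∀ u w, G.Adj u w → φ u ≠ φ w

/-- Vertex `v` satisfies the odd condition w.r.t. `φ`. -/
def OddAt [Fintype V] (G : SimpleGraph V) {α : Type*} (φ : V → α) (v : V) : Prop :=
  ∃ c, Odd (colorCount G φ v c)

/-- `φ` is an odd `m`-coloring of `G`. -/
def IsOddColoring [Fintype V] (G : SimpleGraph V) (m : ℕ) (φ : V → Fin m) : Prop :=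
  ProperColoring G φ ∧ ∀ v : V, (∃ u, G.Adj v u) → OddAt G φ v

/-- `G` is odd `m`-colorable. -/
def OddColorable [Fintype V] (G : SimpleGraph V) (m : ℕ) : Prop :=
  ∃ φ : V → Fin m, IsOddColoring G m φ

/-- The identity ordering of `Fin n` is an addition ordering of `G` as a `k`-tree:
the first `k+1` vertices form a clique and every later vertex's earlier neighborhood
is a clique of order `k`. -/
def IsAdditionOrdering {n : ℕ} (k : ℕ) (G : SimpleGraph (Fin n)) : Prop :=
  (∀ i j : Fin n, i.val < k + 1 → j.val < k + 1 → i ≠ j → G.Adj i j) ∧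
  ∀ i : Fin n, k + 1 ≤ i.val →
    G.IsNClique k (Finset.univ.filter fun j => j < i ∧ G.Adj i j)

/-- `G` is a `k`-tree. -/
def IsKTree (k : ℕ) [Fintype V] (G : SimpleGraph V) : Prop :=
  k + 1 ≤ Fintype.card V ∧
  ∃ e : V ≃ Fin (Fintype.card V),
    IsAdditionOrdering k (SimpleGraph.comap (fun j => e.symm j) G)

/-- The graph obtained from `G` by deleting the vertices in `S`
(the vertices of `S` are kept but become isolated). -/
def GraphDel (G : SimpleGraph V) (S : Set V) : SimpleGraph V where
  Adj x y := G.Adj x y ∧ x ∉ S ∧ y ∉ S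
  symm := ⟨fun x y h => ⟨h.1.symm, h.2.2, h.2.1⟩⟩
  loopless := ⟨fun x h => G.loopless.irrefl x h.1⟩

end Defs
section Defs
variable {V : Type*}

/-- `H` is a minor of `G`, via disjoint connected branch sets. -/
def IsMinorOf {W : Type*} (H : SimpleGraph W) (G : SimpleGraph V) : Prop :=
  ∃ f : W → Set V,
    (∀ w, (f w).Nonempty) ∧
    (∀ w, (G.induce (f w)).Connected) ∧
    (Pairwise fun w w' => Disjoint (f w) (f w')) ∧
    (∀ ⦃w w'⦄, H.Adj w w' → ∃ a ∈ f w, ∃ b ∈ f w', G.Adj a b)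

/-- `G` is `d`-degenerate: every nonempty (induced) subgraph has a vertex of degree at most `d`. -/
def DegenerateLE (G : SimpleGraph V) (d : ℕ) : Prop :=
  ∀ s : Finset V, s.Nonempty → ∃ v ∈ s, (s.filter fun u => G.Adj v u).card ≤ d

/-- `G` is outerplanar iff it has no `K₄` minor and no `K_{2,3}` minor. -/
def Outerplanar (G : SimpleGraph V) : Prop :=
  ¬ IsMinorOf (completeGraph (Fin 4)) G ∧
  ¬ IsMinorOf (completeBipartiteGraph (Fin 2) (Fin 3)) G

/-- `G` has tree-width at most `k`, via tree decompositions. -/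
def TreewidthAtMost [Fintype V] (G : SimpleGraph V) (k : ℕ) : Prop :=
  ∃ (n : ℕ) (T : SimpleGraph (Fin n)) (X : Fin n → Finset V),
    T.IsTree ∧
    (∀ v : V, ∃ i, v ∈ X i) ∧
    (∀ u v : V, G.Adj u v → ∃ i, u ∈ X i ∧ v ∈ X i) ∧
    (∀ v : V, (T.induce {i | v ∈ X i}).Connected) ∧
    (∀ i, (X i).card ≤ k + 1)

/-- The root clique `V_i` of the branch at `v_i`: earlier neighbors of `v_i`. -/
noncomputable def rootClique {n : ℕ} (G : SimpleGraph (Fin n)) (i : Fin n) : Finset (Fin n) :=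
  Finset.univ.filter fun j => j < i ∧ G.Adj i j

/-- Vertices of the branch `B(V_i, v_i)` outside the root clique: vertices reachable
from `v_i` by walks avoiding `V_i`. -/
def branchSet {n : ℕ} (G : SimpleGraph (Fin n)) (i : Fin n) : Set (Fin n) :=
  {x | x ∉ rootClique G i ∧ ∃ p : G.Walk i x, ∀ y ∈ p.support, y ∉ rootClique G i}
end Defs

/-!
Induct on the number of vertices. Pick a vertex `v` of degree at most `d`. If `v` is isolated,
delete it; otherwise contract an edge `vu` onto `u`. The result lies in the family, so it has an
odd `(2d+1)`-coloring `φ`, which is proper on `G - v`. Since the contraction makes every other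
neighbour of `v` adjacent to `u`, the colour of `u` occurs exactly once around `v`, and the
vertices away from `v` keep their neighbourhoods. It remains to colour `v` avoiding the at most
`d` colours of its neighbours and, for each neighbour `w`, one colour of odd multiplicity around
`w` in `G - v` (if there is one): this is possible with `2d + 1` colours, and then every neighbour
of `v` keeps or gains a colour of odd multiplicity.
-/

open Function

section MergeVertex

variable {V : Type*}

/-- `v` is merged into `u`: `u` inherits the neighbours of `v`, and `v` is left isolated.
For `u = v` this deletes `v`. -/
def mergeVertex (G : SimpleGraph V) (v u : V) : SimpleGraph V :=
  SimpleGraph.fromRel fun a b => a ≠ v ∧ b ≠ v ∧ (G.Adj a b ∨ a = u ∧ G.Adj v b)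

variable {G : SimpleGraph V} {v u : V}

lemma not_mergeVertex_adj_left (t : V) : ¬ (mergeVertex G v u).Adj v t := by
  simp [mergeVertex]

lemma mergeVertex_adj_of_adj {a b : V} (ha : a ≠ v) (hb : b ≠ v) (h : G.Adj a b) :
    (mergeVertex G v u).Adj a b :=
  (fromRel_adj _ _ _).2 ⟨h.ne, Or.inl ⟨ha, hb, Or.inl h⟩⟩

lemma mergeVertex_adj_of_adj_adj {t : V} (hu : G.Adj v u) (ht : G.Adj v t) (htu : t ≠ u) :
    (mergeVertex G v u).Adj u t :=
  (fromRel_adj _ _ _).2 ⟨htu.symm, Or.inl ⟨hu.ne.symm, ht.ne.symm, Or.inr ⟨rfl, ht⟩⟩⟩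

lemma mergeVertex_adj_iff_of_not_adj {w t : V} (hwv : w ≠ v) (hw : ¬ G.Adj v w) (hwu : w ≠ u) :
    (mergeVertex G v u).Adj w t ↔ G.Adj w t := by
  simp only [mergeVertex, fromRel_adj]
  constructor
  · rintro ⟨-, ⟨-, -, h | ⟨rfl, -⟩⟩ | ⟨-, -, h | ⟨-, h⟩⟩⟩
    exacts [h, absurd rfl hwu, h.symm, absurd h hw]
  · intro h
    exact ⟨h.ne, Or.inl ⟨hwv, fun htv => hw (htv ▸ h.symm), Or.inl h⟩⟩

lemma isMinorOf_comap_mergeVertex {W : Type*} {ι : W → V} (hι : Injective ι)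
    (hιv : ∀ w, ι w ≠ v) (hu : G.Adj v u ∨ u = v) :
    IsMinorOf ((mergeVertex G v u).comap ι) G := by
  have hmem : ∀ w x, x ∈ (if ι w = u then {u, v} else {ι w} : Set V) ↔
      x = ι w ∨ ι w = u ∧ x = v := by
    intro w x
    split_ifs with h <;> simp [h]
  refine ⟨fun w => if ι w = u then {u, v} else {ι w}, fun w => ⟨ι w, (hmem w _).2 (Or.inl rfl)⟩,
    fun w => ?_, fun w w' hne => ?_, fun w w' h => ?_⟩
  · dsimp only
    by_cases h : ι w = u
    · rw [if_pos h]
      exact induce_pair_connected_of_adj (hu.resolve_right (h ▸ hιv w)).symm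
    · rw [if_neg h]
      exact { preconnected := Preconnected.of_subsingleton }
  · refine Set.disjoint_left.2 fun x hx hx' => ?_
    rcases (hmem w x).1 hx with rfl | ⟨hw, rfl⟩ <;> rcases (hmem w' _).1 hx' with h | ⟨hw', h⟩
    exacts [hne (hι h), hιv w h, hιv w' h.symm, hne (hι (hw.trans hw'.symm))]
  · simp only [comap_adj, mergeVertex, fromRel_adj] at h
    obtain ⟨-, ⟨-, -, h | ⟨hw, h⟩⟩ | ⟨-, -, h | ⟨hw', h⟩⟩⟩ := h
    · exact ⟨ι w, (hmem w _).2 (Or.inl rfl), ι w', (hmem w' _).2 (Or.inl rfl), h⟩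
    · exact ⟨v, (hmem w _).2 (Or.inr ⟨hw, rfl⟩), ι w', (hmem w' _).2 (Or.inl rfl), h⟩
    · exact ⟨ι w, (hmem w _).2 (Or.inl rfl), ι w', (hmem w' _).2 (Or.inl rfl), h.symm⟩
    · exact ⟨ι w, (hmem w _).2 (Or.inl rfl), v, (hmem w' _).2 (Or.inr ⟨hw', rfl⟩), h.symm⟩

end MergeVertex

section OddColoring

variable {V : Type*} {α : Type*}

lemma properColoring_update {G : SimpleGraph V} {φ : V → α} {v : V}
    (hφ : ∀ a b, a ≠ v → b ≠ v → G.Adj a b → φ a ≠ φ b) {x : α} (hx : ∀ t, G.Adj v t → x ≠ φ t) :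
    ProperColoring G (update φ v x) := by
  intro a b hab
  by_cases ha : a = v
  · subst ha
    simpa [hab.ne.symm] using hx b hab
  by_cases hb : b = v
  · subst hb
    simpa [hab.ne] using (hx a hab.symm).symm
  simpa [ha, hb] using hφ a b ha hb hab

variable [Fintype V]

lemma colorCount_congr {G H : SimpleGraph V} {w : V} (h : ∀ t, G.Adj w t ↔ H.Adj w t)
    (φ : V → α) (c : α) : colorCount G φ w c = colorCount H φ w c := by
  unfold colorCount
  congr 1
  ext t
  simp [h]

lemma colorCount_update (G : SimpleGraph V) (φ : V → α) {v w : V} (hwv : w ≠ v) (x c : α) :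
    colorCount G (update φ v x) w c =
      colorCount (GraphDel G {v}) φ w c + if G.Adj w v ∧ x = c then 1 else 0 := by
  have hsplit : (univ.filter fun t => G.Adj w t ∧ update φ v x t = c) =
      (univ.filter fun t => (GraphDel G {v}).Adj w t ∧ φ t = c) ∪
        (univ.filter fun t => t = v ∧ G.Adj w v ∧ x = c) := by
    ext t
    by_cases htv : t = v
    · subst htv
      simp [GraphDel]
    · simp [GraphDel, htv, hwv]
  rw [colorCount, hsplit, card_union_of_disjoint (disjoint_filter.2 fun t _ h h' => h.1.2.2 h'.1)]
  split_ifs with h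
  · simp only [colorCount, h, and_self, and_true]
    exact congrArg _ (card_eq_one.2 ⟨v, by ext; simp⟩)
  · simp [colorCount, h]

lemma oddAt_update_of_not_adj {G H : SimpleGraph V} {φ : V → α} {v w : V} (hwv : w ≠ v)
    (hw : ¬ G.Adj w v) (hadj : ∀ t, H.Adj w t ↔ G.Adj w t) (h : OddAt H φ w) (x : α) :
    OddAt G (update φ v x) w := by
  obtain ⟨c, hc⟩ := h
  have hcount := colorCount_update G φ hwv (φ v) c
  rw [update_eq_self, if_neg fun h => hw h.1, add_zero] at hcount
  refine ⟨c, ?_⟩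
  rwa [colorCount_update G φ hwv, if_neg fun h => hw h.1, add_zero, ← hcount,
    colorCount_congr fun t => (hadj t).symm]

lemma oddAt_of_adj_of_unique {G : SimpleGraph V} {φ : V → α} {v u : V} (hu : G.Adj v u)
    (huniq : ∀ t, G.Adj v t → φ t = φ u → t = u) : OddAt G φ v := by
  refine ⟨φ u, ?_⟩
  have : (univ.filter fun t => G.Adj v t ∧ φ t = φ u) = {u} := by
    ext t
    simp only [mem_filter, mem_univ, true_and, mem_singleton]
    exact ⟨fun h => huniq t h.1 h.2, by rintro rfl; exact ⟨hu, rfl⟩⟩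
  rw [colorCount, this, card_singleton]
  exact odd_one

lemma oddAt_update_of_adj {G : SimpleGraph V} {φ : V → α} {v w : V} (hwv : w ≠ v) (hw : G.Adj w v)
    {x : α} (hx : (∃ c, Odd (colorCount (GraphDel G {v}) φ w c)) →
      ∃ c, Odd (colorCount (GraphDel G {v}) φ w c) ∧ x ≠ c) :
    OddAt G (update φ v x) w := by
  by_cases h : ∃ c, Odd (colorCount (GraphDel G {v}) φ w c)
  · obtain ⟨c, hc, hxc⟩ := hx h
    exact ⟨c, by simpa [colorCount_update G φ hwv, hxc] using hc⟩
  · refine ⟨x, ?_⟩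
    rw [colorCount_update G φ hwv, if_pos ⟨hw, rfl⟩]
    exact (Nat.not_odd_iff_even.1 (not_exists.1 h x)).add_one

end OddColoring

section Transfer

variable {V W : Type*} [Fintype V] [Fintype W] {H : SimpleGraph V} {ι : W → V}

lemma colorCount_comap {α : Type*} (hι : Injective ι) (hrange : ∀ x y, H.Adj x y → ∃ w, ι w = x)
    (ψ : W → α) (e : V → α) (w : W) (c : α) :
    colorCount (H.comap ι) ψ w c = colorCount H (extend ι ψ e) (ι w) c := by
  refine card_bij (fun s _ => ι s) (fun s hs => ?_) (fun _ _ _ _ h => hι h) (fun x hx => ?_)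
  · simpa [hι.extend_apply] using hs
  · simp only [mem_filter, mem_univ, true_and] at hx
    obtain ⟨s, rfl⟩ := hrange x (ι w) hx.1.symm
    exact ⟨s, by simpa [hι.extend_apply] using hx, rfl⟩

theorem OddColorable.of_comap {m : ℕ} [NeZero m] (hι : Injective ι)
    (hrange : ∀ x y, H.Adj x y → ∃ w, ι w = x) (h : OddColorable (H.comap ι) m) :
    OddColorable H m := by
  obtain ⟨ψ, hproper, hodd⟩ := h
  refine ⟨extend ι ψ 0, fun a b hab => ?_, fun x ⟨y, hxy⟩ => ?_⟩
  · obtain ⟨s, rfl⟩ := hrange a b hab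
    obtain ⟨t, rfl⟩ := hrange b _ hab.symm
    simpa [hι.extend_apply] using hproper s t hab
  · obtain ⟨w, rfl⟩ := hrange x y hxy
    obtain ⟨t, rfl⟩ := hrange y _ hxy.symm
    obtain ⟨c, hc⟩ := hodd w ⟨t, hxy⟩
    exact ⟨c, colorCount_comap hι hrange ψ 0 w c ▸ hc⟩

end Transfer

lemma exists_fin_forall_ne_of_card_le {V : Type*} {N : Finset V} {d : ℕ} (hN : #N ≤ d)
    (f g : V → Fin (2 * d + 1)) : ∃ x, ∀ t ∈ N, f t ≠ x ∧ g t ≠ x := by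
  obtain ⟨x, -, hx⟩ : ∃ x ∈ univ, x ∉ N.image f ∪ N.image g := by
    refine exists_mem_notMem_of_card_lt_card ?_
    calc #(N.image f ∪ N.image g) ≤ #N + #N :=
          (card_union_le _ _).trans (add_le_add card_image_le card_image_le)
      _ < #(univ : Finset (Fin (2 * d + 1))) := by simp only [card_univ, Fintype.card_fin]; omega
  refine ⟨x, fun t ht => ⟨fun h => hx ?_, fun h => hx ?_⟩⟩
  exacts [mem_union_left _ (mem_image.2 ⟨t, ht, h⟩),
    mem_union_right _ (mem_image.2 ⟨t, ht, h⟩)]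

theorem OddColorable.of_mergeVertex {V : Type*} [Fintype V] {G : SimpleGraph V} {v u : V} {d : ℕ}
    (hdeg : gdeg G v ≤ d) (hu : G.Adj v u ∨ u = v ∧ ∀ t, ¬ G.Adj v t)
    (h : OddColorable (mergeVertex G v u) (2 * d + 1)) : OddColorable G (2 * d + 1) := by
  obtain ⟨φ, hproper, hodd⟩ := h
  have : ∀ w, ∃ c, (∃ c', Odd (colorCount (GraphDel G {v}) φ w c')) →
      Odd (colorCount (GraphDel G {v}) φ w c) := fun w => by
    by_cases h : ∃ c', Odd (colorCount (GraphDel G {v}) φ w c')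
    exacts [h.imp fun _ hc _ => hc, ⟨0, fun h' => absurd h' h⟩]
  choose oddColor hoddColor using this
  obtain ⟨x, hx⟩ := exists_fin_forall_ne_of_card_le hdeg φ oddColor
  simp only [mem_filter, mem_univ, true_and] at hx
  have hrest : ∀ a b, a ≠ v → b ≠ v → G.Adj a b → φ a ≠ φ b :=
    fun a b ha hb hab => hproper a b (mergeVertex_adj_of_adj ha hb hab)
  refine ⟨update φ v x, properColoring_update hrest fun t ht => (hx t ht).1.symm,
    fun w ⟨y, hwy⟩ => ?_⟩
  by_cases hwv : w = v
  · subst hwv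
    have hvu := hu.resolve_right fun h => h.2 y hwy
    refine oddAt_of_adj_of_unique hvu fun t ht htu => ?_
    by_contra hne
    simp only [update_of_ne ht.ne.symm, update_of_ne hvu.ne.symm] at htu
    exact hproper u t (mergeVertex_adj_of_adj_adj hvu ht hne) htu.symm
  by_cases hvw : G.Adj v w
  · exact oddAt_update_of_adj hwv hvw.symm fun hc => ⟨oddColor w, hoddColor w hc, (hx w hvw).2.symm⟩
  have hwu : w ≠ u := by
    rintro rfl
    rcases hu with h | ⟨h, -⟩
    exacts [hvw h, hwv h]
  have hadj : ∀ t, (mergeVertex G v u).Adj w t ↔ G.Adj w t :=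
    fun t => mergeVertex_adj_iff_of_not_adj hwv hvw hwu
  exact oddAt_update_of_not_adj hwv (fun h => hvw h.symm) hadj (hodd w ⟨y, (hadj y).2 hwy⟩) x

lemma exists_adj_or_isolated {V : Type*} (G : SimpleGraph V) (v : V) :
    ∃ u, G.Adj v u ∨ u = v ∧ ∀ t, ¬ G.Adj v t := by
  by_cases h : ∃ u, G.Adj v u
  exacts [h.imp fun _ => Or.inl, ⟨v, Or.inr ⟨rfl, not_exists.1 h⟩⟩]

/-- If `F` is a minor-closed family of graphs in which every graph is
`d`-degenerate, then every graph in `F` is odd `(2d+1)`-colorable. -/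
theorem minor_closed_degenerate_odd_colorable (d : ℕ)
    (F : ∀ n : ℕ, SimpleGraph (Fin n) → Prop)
    (hminor : ∀ (n m : ℕ) (G : SimpleGraph (Fin n)) (H : SimpleGraph (Fin m)),
      F n G → IsMinorOf H G → F m H)
    (hdeg : ∀ (n : ℕ) (G : SimpleGraph (Fin n)), F n G → DegenerateLE G d) :
    ∀ (n : ℕ) (G : SimpleGraph (Fin n)), F n G → OddColorable G (2 * d + 1) := by
  intro n
  induction n with
  | zero => exact fun G _ => ⟨finZeroElim, fun a => a.elim0, fun a => a.elim0⟩
  | succ m ih =>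
    intro G hG
    obtain ⟨v, -, hv⟩ := hdeg _ G hG univ univ_nonempty
    obtain ⟨u, hu⟩ := exists_adj_or_isolated G v
    have hι := Fin.succAbove_right_injective (p := v)
    have hmin : IsMinorOf ((mergeVertex G v u).comap v.succAbove) G :=
      isMinorOf_comap_mergeVertex hι (Fin.succAbove_ne v) (hu.imp_right And.left)
    have hrange : ∀ x y, (mergeVertex G v u).Adj x y → ∃ w, v.succAbove w = x :=
      fun x y h => Fin.exists_succAbove_eq fun hxv => not_mergeVertex_adj_left y (hxv ▸ h)
    exact (OddColorable.of_comap hι hrange (ih _ (hminor _ _ _ _ hG hmin))).of_mergeVertex hv hu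
end

section
/- For every positive integer k, every graph of tree-width at most k is odd (2k+1)-colorable; in particular, every k-tree is odd (2k+1)-colorable. -/
open SimpleGraph Finset
open scoped Classical

/-!
Both classes consist of spanning subgraphs of graphs `H` whose vertices can be ranked so that the
lower-ranked neighbours of every vertex form a clique of at most `k` vertices. For a `k`-tree take
`H = G` ranked by the construction order. For a tree decomposition of width `k` let `H` join any two
vertices sharing a bag; rooting the tree, rank a vertex by the depth of the highest bag containing
it, which then contains all its lower-ranked neighbours.

Colour the vertices greedily by increasing rank, keeping the colouring proper for `H` and odd on the
coloured part. A new vertex avoids the at most `k` colours of its lower neighbours and the at most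
`k` colours currently odd at them, which leaves one of the `2k+1` colours. Its coloured neighbours
lie in an `H`-clique, so their colours are distinct and each occurs exactly once around the new
vertex. A coloured neighbour keeps its odd colour, as that differs from the new one; if it had no
coloured neighbour before, the new colour is odd at it.
-/

section OddColoring

variable {V α : Type*}

noncomputable def colorCountOn (G : SimpleGraph V) (φ : V → α) (s : Finset V) (v : V) (c : α) :
    ℕ :=
  #{u ∈ s | G.Adj v u ∧ φ u = c}

def IsProperOn (H : SimpleGraph V) (φ : V → α) (s : Finset V) : Prop :=
  ∀ u ∈ s, ∀ w ∈ s, H.Adj u w → φ u ≠ φ w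

def IsOddOn (G : SimpleGraph V) (φ : V → α) (s : Finset V) : Prop :=
  ∀ v ∈ s, (∃ u ∈ s, G.Adj v u) → ∃ c, Odd (colorCountOn G φ s v c)

variable {G H : SimpleGraph V} {φ : V → α} {s : Finset V} {a : V}

lemma colorCountOn_insert_update (ha : a ∉ s) (c₀ : α) (v : V) (c : α) :
    colorCountOn G (Function.update φ a c₀) (insert a s) v c =
      colorCountOn G φ s v c + if G.Adj v a ∧ c₀ = c then 1 else 0 := by
  have hs : {u ∈ s | G.Adj v u ∧ Function.update φ a c₀ u = c} =
      {u ∈ s | G.Adj v u ∧ φ u = c} :=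
    filter_congr fun u hu => by rw [Function.update_of_ne (ne_of_mem_of_not_mem hu ha)]
  unfold colorCountOn
  rw [filter_insert, Function.update_self]
  split_ifs with h
  · rw [card_insert_of_notMem fun h' => ha (mem_filter.1 h').1, hs]
  · rw [hs, add_zero]

lemma colorCountOn_eq_one {v u : V} (hinj : Set.InjOn φ {w | w ∈ s ∧ G.Adj v w}) (hu : u ∈ s)
    (hvu : G.Adj v u) : colorCountOn G φ s v (φ u) = 1 := by
  rw [colorCountOn, card_eq_one]
  refine ⟨u, eq_singleton_iff_unique_mem.2 ⟨by simp [hu, hvu], fun w hw => ?_⟩⟩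
  rw [mem_filter] at hw
  exact hinj ⟨hw.1, hw.2.1⟩ ⟨hu, hvu⟩ hw.2.2

lemma IsProperOn.insert_update (hφ : IsProperOn H φ s) (ha : a ∉ s) {c₀ : α}
    (hc₀ : ∀ u ∈ s, H.Adj a u → φ u ≠ c₀) :
    IsProperOn H (Function.update φ a c₀) (insert a s) := by
  have hne : ∀ u ∈ s, u ≠ a := fun u hu => ne_of_mem_of_not_mem hu ha
  intro u hu w hw huw
  rw [mem_insert] at hu hw
  rcases hu with rfl | hu <;> rcases hw with rfl | hw
  · exact (H.loopless.irrefl _ huw).elim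
  · rw [Function.update_self, Function.update_of_ne (hne w hw)]
    exact (hc₀ w hw huw).symm
  · rw [Function.update_self, Function.update_of_ne (hne u hu)]
    exact hc₀ u hu huw.symm
  · rw [Function.update_of_ne (hne u hu), Function.update_of_ne (hne w hw)]
    exact hφ u hu w hw huw

lemma isOddOn_insert_update (g : V → α)
    (hg : ∀ u ∈ s, (∃ w ∈ s, G.Adj u w) → Odd (colorCountOn G φ s u (g u)))
    (ha : a ∉ s) (hinj : Set.InjOn φ {u | u ∈ s ∧ G.Adj a u}) {c₀ : α}
    (hc₀ : ∀ u ∈ s, G.Adj a u → g u ≠ c₀) :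
    IsOddOn G (Function.update φ a c₀) (insert a s) := by
  intro v hv ⟨u, hu, hvu⟩
  simp_rw [colorCountOn_insert_update ha]
  rcases mem_insert.1 hv with rfl | hv
  · have hus : u ∈ s := (mem_insert.1 hu).resolve_left (G.ne_of_adj hvu).symm
    exact ⟨φ u, by simp [colorCountOn_eq_one hinj hus hvu]⟩
  by_cases hva : G.Adj v a
  · by_cases hvs : ∃ w ∈ s, G.Adj v w
    · exact ⟨g v, by simpa [(hc₀ v hv hva.symm).symm] using hg v hv hvs⟩
    · have hzero : colorCountOn G φ s v c₀ = 0 := by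
        simp only [colorCountOn, card_eq_zero, filter_eq_empty_iff]
        exact fun w hw hvw => hvs ⟨w, hw, hvw.1⟩
      exact ⟨c₀, by simp [hzero, hva]⟩
  · have hus : u ∈ s := (mem_insert.1 hu).resolve_left (by rintro rfl; exact hva hvu)
    exact ⟨g v, by simpa [hva] using hg v hv ⟨u, hus, hvu⟩⟩

end OddColoring

section EliminationRanking

variable {V : Type*} [Fintype V]

noncomputable def lowerNeighbors (H : SimpleGraph V) (r : V → ℕ) (v : V) : Finset V :=
  {u | H.Adj v u ∧ r u ≤ r v}

/-- A perfect elimination ordering of back-degree at most `k`, except that ties are allowed: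
neighbours of equal rank are lower neighbours of each other. -/
structure IsEliminationRanking (H : SimpleGraph V) (k : ℕ) (r : V → ℕ) : Prop where
  isClique_lowerNeighbors : ∀ v, H.IsClique (lowerNeighbors H r v : Set V)
  card_lowerNeighbors_le : ∀ v, #(lowerNeighbors H r v) ≤ k

lemma Finset.exists_notMem_of_card_add_card_lt {β : Type*} [Fintype β] (A B : Finset β)
    (h : #A + #B < Fintype.card β) : ∃ c, c ∉ A ∧ c ∉ B := by
  obtain ⟨c, -, hc⟩ := exists_mem_notMem_of_card_lt_card (s := A ∪ B) (t := univ)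
    ((card_union_le A B).trans_lt (by rwa [card_univ]))
  exact ⟨c, fun h => hc (mem_union_left B h), fun h => hc (mem_union_right A h)⟩

theorem oddColorable_of_le_of_isEliminationRanking {G H : SimpleGraph V} {k : ℕ} {r : V → ℕ}
    (hGH : G ≤ H) (hr : IsEliminationRanking H k r) : OddColorable G (2 * k + 1) := by
  suffices ∀ s : Finset V, ∃ φ : V → Fin (2 * k + 1), IsProperOn H φ s ∧ IsOddOn G φ s by
    obtain ⟨φ, hprop, hodd⟩ := this univ
    exact ⟨φ, fun u w huw => hprop u (mem_univ u) w (mem_univ w) (hGH huw),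
      fun v ⟨u, hvu⟩ => hodd v (mem_univ v) ⟨u, mem_univ u, hvu⟩⟩
  intro s
  induction s using Finset.induction_on_max_value r with
  | empty => exact ⟨0, by simp [IsProperOn], by simp [IsOddOn]⟩
  | insert a s ha hmax ih =>
    obtain ⟨φ, hprop, hodd⟩ := ih
    choose! g hg using hodd
    have hlow : ∀ u ∈ s, H.Adj a u → u ∈ lowerNeighbors H r a := fun u hu hau => by
      simp [lowerNeighbors, hau, hmax u hu]
    obtain ⟨c₀, hφ, hg₀⟩ := Finset.exists_notMem_of_card_add_card_lt
      ((lowerNeighbors H r a).image φ) ((lowerNeighbors H r a).image g) (by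
        have := hr.card_lowerNeighbors_le a
        have := card_image_le (s := lowerNeighbors H r a) (f := φ)
        have := card_image_le (s := lowerNeighbors H r a) (f := g)
        simp only [Fintype.card_fin]
        omega)
    refine ⟨Function.update φ a c₀, hprop.insert_update ha fun u hu hau h => ?_,
      isOddOn_insert_update g hg ha ?_ fun u hu hau h => ?_⟩
    · exact hφ (h ▸ mem_image_of_mem φ (hlow u hu hau))
    · rintro u ⟨hu, hau⟩ w ⟨hw, haw⟩ huw
      by_contra hne
      exact hprop u hu w hw (hr.isClique_lowerNeighbors a (hlow u hu (hGH hau))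
        (hlow w hw (hGH haw)) hne) huw
    · exact hg₀ (h ▸ mem_image_of_mem g (hlow u hu (hGH hau)))

lemma IsEliminationRanking.comap {W : Type*} [Fintype W] {H : SimpleGraph V} {k : ℕ}
    {r : V → ℕ} (hr : IsEliminationRanking H k r) {f : W → V} (hf : Function.Injective f) :
    IsEliminationRanking (H.comap f) k (r ∘ f) := by
  have hmaps : ∀ w, Set.MapsTo f (lowerNeighbors (H.comap f) (r ∘ f) w)
      (lowerNeighbors H r (f w)) := fun w u hu => by
    simpa [lowerNeighbors] using hu
  refine ⟨fun w a ha b hb hab => ?_, fun w => ?_⟩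
  · exact hr.isClique_lowerNeighbors (f w) (hmaps w ha) (hmaps w hb) (hf.ne hab)
  · exact (card_le_card_of_injOn f (hmaps w) hf.injOn).trans (hr.card_lowerNeighbors_le _)

lemma IsAdditionOrdering.isEliminationRanking {n k : ℕ} {G : SimpleGraph (Fin n)}
    (hG : IsAdditionOrdering k G) : IsEliminationRanking G k Fin.val := by
  have hlow : ∀ i, lowerNeighbors G Fin.val i = rootClique G i := fun i => by
    ext j
    simp only [lowerNeighbors, rootClique, mem_filter, mem_univ, true_and, Fin.val_fin_le]
    exact ⟨fun h => ⟨lt_of_le_of_ne h.2 (G.ne_of_adj h.1).symm, h.1⟩,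
      fun h => ⟨h.2, h.1.le⟩⟩
  have hsmall : ∀ i : Fin n, ¬k + 1 ≤ i.val → ∀ j ∈ rootClique G i, j.val < k + 1 := by
    intro i hi j hj
    have := (mem_filter.1 hj).2.1
    omega
  refine ⟨fun i => ?_, fun i => ?_⟩ <;> rw [hlow] <;> by_cases hi : k + 1 ≤ i.val
  · exact (hG.2 i hi).isClique
  · exact fun j hj j' hj' hne => hG.1 j j' (hsmall i hi j hj) (hsmall i hi j' hj') hne
  · exact (hG.2 i hi).card_eq.le
  · calc #(rootClique G i) ≤ #(Iio i) :=
          card_le_card fun j hj => mem_Iio.2 (mem_filter.1 hj).2.1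
      _ ≤ k := by rw [Fin.card_Iio]; omega

lemma IsKTree.exists_isEliminationRanking {k : ℕ} {G : SimpleGraph V} (hG : IsKTree k G) :
    ∃ r, IsEliminationRanking G k r := by
  obtain ⟨-, e, he⟩ := hG
  have := he.isEliminationRanking.comap e.injective
  rw [SimpleGraph.comap_comap] at this
  exact ⟨_, by simpa using this⟩

end EliminationRanking

namespace SimpleGraph

variable {ι : Type*} {T : SimpleGraph ι}

lemma IsTree.dist_eq_length (hT : T.IsTree) {x y : ι} {p : T.Walk x y} (hp : p.IsPath) :
    T.dist x y = p.length := by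
  obtain ⟨q, hq, hlen⟩ := hT.connected.exists_path_of_dist x y
  rw [← hlen, (hT.existsUnique_path x y).unique hq hp]

lemma IsTree.dist_lt_of_mem_support (hT : T.IsTree) {x y z : ι} {p : T.Walk x y}
    (hp : p.IsPath) (hz : z ∈ p.support) (hzx : z ≠ x) : T.dist z y < T.dist x y := by
  have hlen := congrArg Walk.length (p.take_spec hz)
  have hpos : (p.takeUntil z hz).length ≠ 0 := fun h => hzx (Walk.eq_of_length_eq_zero h).symm
  rw [Walk.length_append] at hlen
  rw [hT.dist_eq_length hp, hT.dist_eq_length (hp.dropUntil hz)]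
  omega

lemma IsTree.mem_support_takeUntil_of_dist_le (hT : T.IsTree) {x y a b : ι} {p : T.Walk x y}
    (hp : p.IsPath) (ha : a ∈ p.support) (hb : b ∈ p.support) (hab : T.dist a y ≤ T.dist b y) :
    b ∈ (p.takeUntil a ha).support := by
  rw [← p.take_spec ha, Walk.mem_support_append_iff] at hb
  rcases hb with hb | hb
  · exact hb
  by_cases hba : b = a
  · subst hba
    exact Walk.end_mem_support _
  · exact absurd hab (not_le.2 (hT.dist_lt_of_mem_support (hp.dropUntil ha) hb hba))

lemma IsTree.mem_of_mem_support_of_preconnected_induce (hT : T.IsTree) {S : Set ι}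
    (hS : (T.induce S).Preconnected) {x y z : ι} (hx : x ∈ S) (hy : y ∈ S) {p : T.Walk x y}
    (hp : p.IsPath) (hz : z ∈ p.support) : z ∈ S := by
  obtain ⟨q⟩ := hS ⟨x, hx⟩ ⟨y, hy⟩
  obtain rfl :=
    (hT.existsUnique_path x y).unique hp (q.map (Embedding.induce S).toHom).bypass_isPath
  obtain ⟨w, -, rfl⟩ :=
    List.mem_map.1 (Walk.support_map _ _ ▸ Walk.support_bypass_subset_support _ hz)
  exact w.2

lemma IsTree.mem_support_of_forall_dist_le (hT : T.IsTree) {S : Set ι} {m ρ : ι}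
    (hm : ∀ y ∈ S, T.dist m ρ ≤ T.dist y ρ) {x : ι} (q : T.Walk x m)
    (hq : ∀ z ∈ q.support, z ∈ S) {p : T.Walk x ρ} (hp : p.IsPath) : m ∈ p.support := by
  induction q with
  | nil => exact p.start_mem_support
  | @cons x x' _ hxx' q ih =>
    have hq' : ∀ z ∈ q.support, z ∈ S := fun z hz => hq z (by simp [hz])
    by_cases hx' : x' ∈ p.support
    · exact p.support_dropUntil_subset_support hx' (ih hm hq' (hp.dropUntil hx'))
    · have hp' : (Walk.cons hxx'.symm p).IsPath := hp.cons hx'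
      rcases List.mem_cons.1 (ih hm hq' hp') with rfl | h
      · exact absurd (hm x (hq x (by simp)))
          (not_le.2 (hT.dist_lt_of_mem_support hp' (by simp) hxx'.ne))
      · exact h

end SimpleGraph

section TreeDecomposition

variable {V ι : Type*}

def bagGraph (X : ι → Finset V) : SimpleGraph V where
  Adj u v := u ≠ v ∧ ∃ i, u ∈ X i ∧ v ∈ X i
  symm := ⟨fun _ _ ⟨hne, i, hu, hv⟩ => ⟨hne.symm, i, hv, hu⟩⟩
  loopless := ⟨fun _ h => h.1 rfl⟩

theorem SimpleGraph.IsTree.exists_isEliminationRanking_bagGraph [Fintype V]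
    {T : SimpleGraph ι} (hT : T.IsTree) {X : ι → Finset V} {k : ℕ}
    (hconn : ∀ v, (T.induce {i | v ∈ X i}).Connected) (hcard : ∀ i, #(X i) ≤ k + 1) :
    ∃ r, IsEliminationRanking (bagGraph X) k r := by
  obtain ⟨ρ⟩ := hT.connected.nonempty
  have hbag : ∀ v, ∃ t, v ∈ X t ∧ ∀ i, v ∈ X i → T.dist t ρ ≤ T.dist i ρ := fun v =>
    let ⟨⟨i, hi⟩⟩ := (hconn v).nonempty
    ⟨_, Function.argminOn_mem (T.dist · ρ) {i | v ∈ X i} ⟨i, hi⟩,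
      fun _ hj => Function.argminOn_le (T.dist · ρ) {i | v ∈ X i} hj⟩
  choose top htop hmin using hbag
  have hconvex : ∀ v {x y z : ι}, v ∈ X x → v ∈ X y → ∀ {p : T.Walk x y}, p.IsPath →
      z ∈ p.support → v ∈ X z := fun v =>
    hT.mem_of_mem_support_of_preconnected_induce (hconn v).preconnected
  have htop_mem : ∀ v {i : ι} {p : T.Walk i ρ}, p.IsPath → v ∈ X i → top v ∈ p.support := by
    intro v i p hp hvi
    obtain ⟨q, hq, -⟩ := hT.existsUnique_path i (top v)
    exact hT.mem_support_of_forall_dist_le (hmin v) q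
      (fun _ hz => hconvex v hvi (htop v) hq hz) hp
  have hlow : ∀ v, lowerNeighbors (bagGraph X) (fun v => T.dist (top v) ρ) v ⊆
      (X (top v)).erase v := by
    intro v u hu
    obtain ⟨⟨hvu, i, hvi, hui⟩, hle⟩ := (mem_filter.1 hu).2
    obtain ⟨P, hP, -⟩ := hT.existsUnique_path i ρ
    have hPu := htop_mem u hP hui
    exact mem_erase.2 ⟨hvu.symm, hconvex u hui (htop u) (hP.takeUntil hPu)
      (hT.mem_support_takeUntil_of_dist_le hP hPu (htop_mem v hP hvi) hle)⟩
  refine ⟨fun v => T.dist (top v) ρ, fun v a ha b hb hab => ?_, fun v => ?_⟩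
  · exact ⟨hab, top v, mem_of_mem_erase (hlow v ha), mem_of_mem_erase (hlow v hb)⟩
  · calc #(lowerNeighbors _ _ v) ≤ #((X (top v)).erase v) := card_le_card (hlow v)
      _ = #(X (top v)) - 1 := card_erase_of_mem (htop v)
      _ ≤ k := by have := hcard (top v); omega

end TreeDecomposition

theorem treewidth_odd_colorable_general (k : ℕ) :
    (∀ (V : Type) [Fintype V] (G : SimpleGraph V),
      TreewidthAtMost G k → OddColorable G (2 * k + 1)) ∧
    (∀ (V : Type) [Fintype V] (G : SimpleGraph V),
      IsKTree k G → OddColorable G (2 * k + 1)) := by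
  refine ⟨fun V _ G ⟨n, T, X, hT, _, hedge, hconn, hcard⟩ => ?_, fun V _ G hG => ?_⟩
  · obtain ⟨r, hr⟩ := hT.exists_isEliminationRanking_bagGraph hconn hcard
    exact oddColorable_of_le_of_isEliminationRanking (H := bagGraph X)
      (fun u v h => ⟨h.ne, hedge u v h⟩) hr
  · obtain ⟨r, hr⟩ := hG.exists_isEliminationRanking
    exact oddColorable_of_le_of_isEliminationRanking le_rfl hr

/-- For every positive `k`, every graph of tree-width at most `k` is odd
`(2k+1)`-colorable; in particular every `k`-tree is odd `(2k+1)`-colorable. -/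
theorem treewidth_odd_colorable (k : ℕ) (hk : 1 ≤ k) :
    (∀ (V : Type) [Fintype V] (G : SimpleGraph V),
      TreewidthAtMost G k → OddColorable G (2 * k + 1)) ∧
    (∀ (V : Type) [Fintype V] (G : SimpleGraph V),
      IsKTree k G → OddColorable G (2 * k + 1)) :=
  treewidth_odd_colorable_general k
end

section
/- Let k be a positive integer, G a k-tree, W a k-clique of G that is the root of a branch B, and u₁,…,u_r the first r vertices of the branch in an addition ordering. Suppose W̄ = {w ∈ W : w ∉ ⋂_{i=1}^r N_G(u_i)} is nonempty. Then there is an injection σ: W̄ → {u₁,…,u_r} such that w ∉ N_G(σ(w)) for every w ∈ W̄; in particular |W̄| ≤ r. -/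
open SimpleGraph Finset
open scoped Classical

/-!
A vertex `u` of the branch `B(W, i)` is the first non-neighbour in `U` of at most one `w ∈ W`.
Indeed, if `u` were the first non-neighbour of two vertices `w ≠ w'`, then every earlier
neighbour `x` of `u` would be adjacent to both: either `x ∈ W`, or `x = i`, or `x` lies in the
branch strictly between `i` and `u`, hence in `U` before `u`. The earlier neighbours of `u` form a
`k`-clique, so together with `w, w'` they would give a `(k + 2)`-clique, which a `k`-tree does not
have. That branch vertices come after `i` is the separation property of the root clique `W`.
-/

section KTreeBranch

variable {n k : ℕ} {G : SimpleGraph (Fin n)}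

lemma mem_rootClique {i j : Fin n} : j ∈ rootClique G i ↔ j < i ∧ G.Adj i j := by
  simp [rootClique]

lemma IsAdditionOrdering.isNClique_rootClique (hG : IsAdditionOrdering k G) {i : Fin n}
    (hi : k + 1 ≤ i.val) : G.IsNClique k (rootClique G i) :=
  hG.2 i hi

lemma IsAdditionOrdering.cliqueFree (hG : IsAdditionOrdering k G) : G.CliqueFree (k + 2) := by
  intro C hC
  have hne : C.Nonempty := by rw [← card_pos, hC.card_eq]; omega
  have hmC := C.max'_mem hne
  by_cases hm : k + 1 ≤ (C.max' hne).val
  · have hsub : C.erase (C.max' hne) ⊆ rootClique G (C.max' hne) := fun x hx => by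
      obtain ⟨hxm, hxC⟩ := mem_erase.1 hx
      exact mem_rootClique.2
        ⟨(C.le_max' x hxC).lt_of_ne hxm, hC.isClique hmC hxC (Ne.symm hxm)⟩
    have := card_le_card hsub
    rw [card_erase_of_mem hmC, hC.card_eq, (hG.isNClique_rootClique hm).card_eq] at this
    omega
  · have hval : Set.MapsTo Fin.val (C : Set (Fin n)) (range (k + 1) : Set ℕ) := by
      intro x hx
      have := Fin.le_def.1 (C.le_max' x hx)
      simp only [coe_range, Set.mem_Iio]
      omega
    have := card_le_card_of_injOn Fin.val hval Fin.val_injective.injOn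
    rw [card_range, hC.card_eq] at this
    omega

lemma mem_branchSet_of_adj {i x y : Fin n} (hx : x ∈ branchSet G i) (hxy : G.Adj x y)
    (hy : y ∉ rootClique G i) : y ∈ branchSet G i := by
  obtain ⟨-, p, hp⟩ := hx
  refine ⟨hy, p.concat hxy, fun z hz => ?_⟩
  rw [Walk.support_concat, List.mem_append, List.mem_singleton] at hz
  rcases hz with hz | rfl
  exacts [hp z hz, hy]

/-- The invariant carried along walks of the branch: it passes to every neighbour outside
`rootClique G i` because the earlier neighbourhoods of vertices above `i` are cliques. -/
def DescentsStayAbove (G : SimpleGraph (Fin n)) (i x : Fin n) : Prop :=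
  ∀ y, Relation.ReflTransGen (fun a b => b ∈ rootClique G a ∧ b ∉ rootClique G i) x y → i ≤ y

lemma descentsStayAbove_self (i : Fin n) : DescentsStayAbove G i i := by
  intro y h
  rcases h.cases_head with rfl | ⟨c, hc, -⟩
  · exact le_rfl
  · exact absurd hc.1 hc.2

lemma DescentsStayAbove.le {i x : Fin n} (hx : DescentsStayAbove G i x) : i ≤ x :=
  hx x .refl

lemma DescentsStayAbove.of_adj {i x y : Fin n}
    (hclq : ∀ z, i < z → G.IsClique (rootClique G z : Set (Fin n)))
    (hx : DescentsStayAbove G i x) (hxy : G.Adj x y) (hy : y ∉ rootClique G i) :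
    DescentsStayAbove G i y := by
  induction y using WellFoundedLT.induction with
  | _ y ih =>
    rcases lt_or_gt_of_ne hxy.ne' with hyx | hxy'
    · exact fun z hz => hx z (.head ⟨mem_rootClique.2 ⟨hyx, hxy⟩, hy⟩ hz)
    intro z hz
    rcases hz.cases_head with rfl | ⟨c, ⟨hcy, hcW⟩, hcz⟩
    · exact hx.le.trans hxy'.le
    have hxy_mem : x ∈ rootClique G y := mem_rootClique.2 ⟨hxy', hxy.symm⟩
    have hclq_y := hclq y (hx.le.trans_lt hxy')
    rcases lt_trichotomy c x with hcx | rfl | hxc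
    · exact hx z (.head ⟨mem_rootClique.2 ⟨hcx, hclq_y hxy_mem hcy hcx.ne'⟩, hcW⟩ hcz)
    · exact hx z hcz
    · exact ih c (mem_rootClique.1 hcy).1 (hclq_y hxy_mem hcy hxc.ne) hcW z hcz

lemma DescentsStayAbove.of_walk {i a b : Fin n}
    (hclq : ∀ z, i < z → G.IsClique (rootClique G z : Set (Fin n)))
    (ha : DescentsStayAbove G i a) (p : G.Walk a b)
    (hp : ∀ y ∈ p.support, y ∉ rootClique G i) : DescentsStayAbove G i b := by
  induction p with
  | nil => exact ha
  | cons hadj q ih =>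
    exact ih (ha.of_adj hclq hadj (hp _ (by simp))) fun y hy => hp y (by simp [hy])

lemma IsAdditionOrdering.le_of_mem_branchSet (hG : IsAdditionOrdering k G) {i x : Fin n}
    (hi : k + 1 ≤ i.val) (hx : x ∈ branchSet G i) : i ≤ x := by
  obtain ⟨-, p, hp⟩ := hx
  have hclq : ∀ z, i < z → G.IsClique (rootClique G z : Set (Fin n)) := fun z hz =>
    (hG.isNClique_rootClique (hi.trans (Fin.lt_def.1 hz).le)).isClique
  exact ((descentsStayAbove_self i).of_walk hclq p hp).le

/-- `u = σ(w)` in the paper's notation. -/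
def IsFirstNonAdj (G : SimpleGraph (Fin n)) (U : Finset (Fin n)) (w u : Fin n) : Prop :=
  u ∈ U ∧ ¬ G.Adj u w ∧ ∀ u' ∈ U, u' < u → G.Adj u' w

lemma exists_isFirstNonAdj {U : Finset (Fin n)} {w : Fin n} (h : ∃ u ∈ U, ¬ G.Adj u w) :
    ∃ u, IsFirstNonAdj G U w u := by
  obtain ⟨u, hu, huw⟩ := h
  obtain ⟨v, hv, hmin⟩ :=
    (U.filter fun u => ¬ G.Adj u w).exists_min_image id ⟨u, mem_filter.2 ⟨hu, huw⟩⟩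
  obtain ⟨hvU, hvw⟩ := mem_filter.1 hv
  refine ⟨v, hvU, hvw, fun u' hu' hlt => ?_⟩
  by_contra hu'w
  exact (hmin u' (mem_filter.2 ⟨hu', hu'w⟩)).not_gt hlt

section InitialSegment

variable {i : Fin n} {U : Finset (Fin n)}

lemma IsFirstNonAdj.adj_of_mem_rootClique (hG : IsAdditionOrdering k G) (hi : k + 1 ≤ i.val)
    (hUinit : ∀ x : Fin n, x ∈ branchSet G i → i < x → x ∉ U → ∀ u ∈ U, u < x)
    {w u x : Fin n} (h : IsFirstNonAdj G U w u) (hub : u ∈ branchSet G i)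
    (hw : w ∈ rootClique G i) (hx : x ∈ rootClique G u) : G.Adj x w := by
  obtain ⟨hu, huw, hfirst⟩ := h
  obtain ⟨hxu, hux⟩ := mem_rootClique.1 hx
  have hxw : x ≠ w := by rintro rfl; exact huw hux
  by_cases hxW : x ∈ rootClique G i
  · exact (hG.isNClique_rootClique hi).isClique hxW hw hxw
  have hxB := mem_branchSet_of_adj hub hux hxW
  rcases (hG.le_of_mem_branchSet hi hxB).eq_or_lt with rfl | hix
  · exact (mem_rootClique.1 hw).2
  have hxU : x ∈ U := by
    by_contra hxU
    exact lt_asymm hxu (hUinit x hxB hix hxU u hu)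
  exact hfirst x hxU hxu

lemma IsFirstNonAdj.eq_of_mem_rootClique (hG : IsAdditionOrdering k G) (hi : k + 1 ≤ i.val)
    (hUinit : ∀ x : Fin n, x ∈ branchSet G i → i < x → x ∉ U → ∀ u ∈ U, u < x)
    {w w' u : Fin n} (h : IsFirstNonAdj G U w u) (h' : IsFirstNonAdj G U w' u)
    (hub : u ∈ branchSet G i) (hw : w ∈ rootClique G i) (hw' : w' ∈ rootClique G i) :
    w = w' := by
  by_contra hne
  have hS := hG.isNClique_rootClique (hi.trans (Fin.le_def.1 (hG.le_of_mem_branchSet hi hub)))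
  have hS' : G.IsNClique (k + 1) (insert w' (rootClique G u)) :=
    hS.insert fun x hx => (h'.adj_of_mem_rootClique hG hi hUinit hub hw' hx).symm
  refine hG.cliqueFree (insert w (insert w' (rootClique G u))) (hS'.insert fun x hx => ?_)
  rcases mem_insert.1 hx with rfl | hx
  · exact (hG.isNClique_rootClique hi).isClique hw hw' hne
  · exact (h.adj_of_mem_rootClique hG hi hUinit hub hw hx).symm

end InitialSegment

end KTreeBranch

theorem branch_nonneighbor_injection_general {n k r : ℕ}
    (G : SimpleGraph (Fin n)) (hG : IsAdditionOrdering k G)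
    (i : Fin n) (hi : k + 1 ≤ i.val) (U : Finset (Fin n))
    (hU : ∀ u ∈ U, u ∈ branchSet G i ∧ i < u)
    (hUcard : U.card = r)
    (hUinit : ∀ x : Fin n, x ∈ branchSet G i → i < x → x ∉ U → ∀ u ∈ U, u < x) :
    ∃ σ : Fin n → Fin n,
      Set.InjOn σ ↑((rootClique G i).filter fun w => ∃ u ∈ U, ¬ G.Adj u w) ∧
      (∀ w ∈ (rootClique G i).filter fun w => ∃ u ∈ U, ¬ G.Adj u w,
        σ w ∈ U ∧ ¬ G.Adj (σ w) w) ∧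
      ((rootClique G i).filter fun w => ∃ u ∈ U, ¬ G.Adj u w).card ≤ r := by
  have hfirst : ∀ w ∈ (rootClique G i).filter fun w => ∃ u ∈ U, ¬ G.Adj u w,
      ∃ u, IsFirstNonAdj G U w u := fun w hw => exists_isFirstNonAdj (mem_filter.1 hw).2
  choose! σ hσ using hfirst
  have hinj : Set.InjOn σ ↑((rootClique G i).filter fun w => ∃ u ∈ U, ¬ G.Adj u w) := by
    intro w hw w' hw' hσw
    exact (hσ w hw).eq_of_mem_rootClique hG hi hUinit (hσw.symm ▸ hσ w' hw')
      (hU _ (hσ w hw).1).1 (mem_filter.1 hw).1 (mem_filter.1 hw').1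
  refine ⟨σ, hinj, fun w hw => ⟨(hσ w hw).1, (hσ w hw).2.1⟩, ?_⟩
  exact hUcard ▸ card_le_card_of_injOn σ (fun w hw => (hσ w hw).1) hinj

/-- If `U` consists of the first `r` branch vertices after the apex, then
there is an injection `σ` from `W̄ = {w ∈ W : w ∉ ⋂_{u ∈ U} N(u)}` to `U` with
`w ∉ N(σ w)`; in particular `|W̄| ≤ r`. -/
theorem branch_nonneighbor_injection {n k r : ℕ} (hk : 1 ≤ k)
    (G : SimpleGraph (Fin n)) (hG : IsAdditionOrdering k G)
    (i : Fin n) (hi : k + 1 ≤ i.val) (U : Finset (Fin n))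
    (hU : ∀ u ∈ U, u ∈ branchSet G i ∧ i < u)
    (hUcard : U.card = r)
    (hUinit : ∀ x : Fin n, x ∈ branchSet G i → i < x → x ∉ U → ∀ u ∈ U, u < x)
    (hW : ((rootClique G i).filter fun w => ∃ u ∈ U, ¬ G.Adj u w).Nonempty) :
    ∃ σ : Fin n → Fin n,
      Set.InjOn σ ↑((rootClique G i).filter fun w => ∃ u ∈ U, ¬ G.Adj u w) ∧
      (∀ w ∈ (rootClique G i).filter fun w => ∃ u ∈ U, ¬ G.Adj u w,
        σ w ∈ U ∧ ¬ G.Adj (σ w) w) ∧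
      ((rootClique G i).filter fun w => ∃ u ∈ U, ¬ G.Adj u w).card ≤ r :=
  branch_nonneighbor_injection_general G hG i hi U hU hUcard hUinit
end

section
/- Every 2-tree of order at least 4 contains a subgraph H belonging to the family H⁽²⁾(G) ∪ T⁽²⁾(G) that is neither a hat nor a double hat of G (unavoidable configurations lemma for 2-trees). -/
open SimpleGraph Finset
open scoped Classical

section Defs
variable {V : Type*}

/-- An ear of a 2-tree over the edge `{v₁,v₂}`. -/
def IsEar2 (G : SimpleGraph V) (v₁ v₂ u₀ : V) : Prop :=
  G.Adj v₁ v₂ ∧ G.neighborSet u₀ = {v₁, v₂}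

/-- A hat of a 2-tree over the edge `{v₁,v₂}`. -/
def IsHat2 (G : SimpleGraph V) (v₁ v₂ u₀ u₁ u₂ : V) : Prop :=
  G.Adj v₁ v₂ ∧ G.neighborSet u₀ = {v₁, v₂, u₁, u₂} ∧
  G.neighborSet u₁ = {v₁, u₀} ∧ G.neighborSet u₂ = {v₂, u₀}

/-- A double hat of a 2-tree over the edge `{v₁,v₂}`. -/
def IsDoubleHat2 (G : SimpleGraph V) (v₁ v₂ u₀ u₁ u₂ u₃ u₄ u₅ u₆ : V) : Prop :=
  G.Adj v₁ v₂ ∧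
  G.neighborSet u₀ = {v₁, v₂, u₁, u₂, u₄, u₅} ∧
  G.neighborSet u₁ = {v₁, u₀, u₃, u₄} ∧
  G.neighborSet u₂ = {v₂, u₀, u₅, u₆} ∧
  G.neighborSet u₃ = {v₁, u₁} ∧ G.neighborSet u₄ = {u₀, u₁} ∧
  G.neighborSet u₅ = {u₀, u₂} ∧ G.neighborSet u₆ = {v₂, u₂}

/-- The branch over the edge `{a,b}` with apex `u` is an ear, a hat, or a double hat. -/
def SpecialBranch2 (G : SimpleGraph V) (a b u : V) : Prop :=
  IsEar2 G a b u ∨ (∃ x y, IsHat2 G a b u x y) ∨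
  ∃ x₁ x₂ x₃ x₄ x₅ x₆, IsDoubleHat2 G a b u x₁ x₂ x₃ x₄ x₅ x₆

/-- `|N(u₀) ∩ N(a)| ≤ 1`. -/
def Side2Small (G : SimpleGraph V) (a u₀ : V) : Prop :=
  (G.neighborSet u₀ ∩ G.neighborSet a).Subsingleton

/-- `N(u₀) ∩ N(a) = {b, u}` with `B({a,u₀},u)` an ear, hat or double hat. -/
def Side2Branch (G : SimpleGraph V) (a b u₀ : V) : Prop :=
  ∃ u, b ≠ u ∧ G.neighborSet u₀ ∩ G.neighborSet a = {b, u} ∧ SpecialBranch2 G a u₀ u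

/-- Membership of the branch `B({v₁,v₂},u₀)` in `𝓗⁽²⁾(G)`. -/
def InH2 (G : SimpleGraph V) (v₁ v₂ u₀ : V) : Prop :=
  G.Adj v₁ v₂ ∧ G.Adj v₁ u₀ ∧ G.Adj v₂ u₀ ∧
  (Side2Small G v₁ u₀ ∨ Side2Branch G v₁ v₂ u₀) ∧
  (Side2Small G v₂ u₀ ∨ Side2Branch G v₂ v₁ u₀) ∧
  (Side2Branch G v₁ v₂ u₀ ∨ Side2Branch G v₂ v₁ u₀)

/-- Membership of a pair of special branches over the edge `{v₁,v₂}` in `𝓣⁽²⁾(G)`. -/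
def InT2 (G : SimpleGraph V) (v₁ v₂ : V) : Prop :=
  ∃ u₀ w₀, u₀ ≠ w₀ ∧ SpecialBranch2 G v₁ v₂ u₀ ∧ SpecialBranch2 G v₁ v₂ w₀

/-- An ear of a 3-tree over the triangle `{v₁,v₂,v₃}`. -/
def IsEar3 (G : SimpleGraph V) (v₁ v₂ v₃ u₀ : V) : Prop :=
  G.Adj v₁ v₂ ∧ G.Adj v₂ v₃ ∧ G.Adj v₁ v₃ ∧ G.neighborSet u₀ = {v₁, v₂, v₃}

/-- A one-hat of a 3-tree over the triangle `{v₁,v₂,v₃}`. -/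
def IsOneHat3 (G : SimpleGraph V) (v₁ v₂ v₃ u₀ u₁ : V) : Prop :=
  G.Adj v₁ v₂ ∧ G.Adj v₂ v₃ ∧ G.Adj v₁ v₃ ∧
  G.neighborSet u₀ = {v₁, v₂, v₃, u₁} ∧ G.neighborSet u₁ = {v₁, v₂, u₀}

/-- A one-hat plus of a 3-tree over the triangle `{v₁,v₂,v₃}`. -/
def IsOneHatPlus3 (G : SimpleGraph V) (v₁ v₂ v₃ u₀ u₁ u₂ u₃ : V) : Prop :=
  G.Adj v₁ v₂ ∧ G.Adj v₂ v₃ ∧ G.Adj v₁ v₃ ∧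
  G.neighborSet u₀ = {v₁, v₂, v₃, u₁, u₂, u₃} ∧
  G.neighborSet u₁ = {v₁, v₂, u₀, u₃} ∧
  G.neighborSet u₂ = {v₂, v₃, u₀} ∧
  G.neighborSet u₃ = {v₁, u₀, u₁}

/-- The branch over the (unordered) triangle `{a,b,c}` with apex `u` is a one-hat. -/
def IsOneHatBranch3 (G : SimpleGraph V) (a b c u : V) : Prop :=
  ∃ x, IsOneHat3 G a b c u x ∨ IsOneHat3 G b c a u x ∨ IsOneHat3 G c a b u x

/-- The branch over the (unordered) triangle `{a,b,c}` with apex `u` is a one-hat plus. -/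
def IsOneHatPlusBranch3 (G : SimpleGraph V) (a b c u : V) : Prop :=
  ∃ x₁ x₂ x₃,
    IsOneHatPlus3 G a b c u x₁ x₂ x₃ ∨ IsOneHatPlus3 G b c a u x₁ x₂ x₃ ∨
    IsOneHatPlus3 G c a b u x₁ x₂ x₃ ∨ IsOneHatPlus3 G a c b u x₁ x₂ x₃ ∨
    IsOneHatPlus3 G b a c u x₁ x₂ x₃ ∨ IsOneHatPlus3 G c b a u x₁ x₂ x₃

/-- The branch over the triangle `{a,b,c}` with apex `u` is an ear, one-hat or one-hat plus. -/
def SpecialBranch3 (G : SimpleGraph V) (a b c u : V) : Prop :=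
  IsEar3 G a b c u ∨ IsOneHatBranch3 G a b c u ∨ IsOneHatPlusBranch3 G a b c u

/-- `|N(u₀) ∩ N(a) ∩ N(b)| ≤ 1`. -/
def Side3Small (G : SimpleGraph V) (a b u₀ : V) : Prop :=
  (G.neighborSet u₀ ∩ G.neighborSet a ∩ G.neighborSet b).Subsingleton

/-- `N(u₀) ∩ N(a) ∩ N(b) = {c, u}` with `B({a,b,u₀},u)` an ear, one-hat or one-hat plus. -/
def Side3Branch (G : SimpleGraph V) (a b c u₀ : V) : Prop :=
  ∃ u, c ≠ u ∧ G.neighborSet u₀ ∩ G.neighborSet a ∩ G.neighborSet b = {c, u} ∧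
    SpecialBranch3 G a b u₀ u

/-- Membership of the branch `B({v₁,v₂,v₃},u₀)` in `𝓗⁽³⁾(G)`. -/
def InH3 (G : SimpleGraph V) (v₁ v₂ v₃ u₀ : V) : Prop :=
  G.Adj v₁ v₂ ∧ G.Adj v₂ v₃ ∧ G.Adj v₁ v₃ ∧
  G.Adj v₁ u₀ ∧ G.Adj v₂ u₀ ∧ G.Adj v₃ u₀ ∧
  (Side3Small G v₁ v₂ u₀ ∨ Side3Branch G v₁ v₂ v₃ u₀) ∧
  (Side3Small G v₂ v₃ u₀ ∨ Side3Branch G v₂ v₃ v₁ u₀) ∧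
  (Side3Small G v₃ v₁ u₀ ∨ Side3Branch G v₃ v₁ v₂ u₀) ∧
  (Side3Branch G v₁ v₂ v₃ u₀ ∨ Side3Branch G v₂ v₃ v₁ u₀ ∨ Side3Branch G v₃ v₁ v₂ u₀)

/-- Membership of a pair of special branches over the triangle `{v₁,v₂,v₃}` in `𝓣⁽³⁾(G)`. -/
def InT3 (G : SimpleGraph V) (v₁ v₂ v₃ : V) : Prop :=
  ∃ u₀ w₀, u₀ ≠ w₀ ∧ SpecialBranch3 G v₁ v₂ v₃ u₀ ∧ SpecialBranch3 G v₁ v₂ v₃ w₀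
end Defs


/-!
Suppose a 2-tree `G` has no such configuration, and fix an addition ordering. By downward
induction along the ordering, the branch over the edge joining the two parents of any vertex `i`
is an ear, a hat or a double hat: a common neighbour of `i` and a parent `a`, other than the
second parent, is a later vertex with parents `a, i`, so its branch is special; there is at most
one such vertex on each side of `i`, since two would form a configuration of `T⁽²⁾(G)`; hence
the branch at `i` is an ear or lies in `H⁽²⁾(G)`, and then it is a hat or a double hat.
Permuting the first triangle, we may assume that the fourth vertex has the same parents as the
third one, and their two special branches form a configuration of `T⁽²⁾(G)`.
-/

section Unavoidable

variable {V W : Type*}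

def HasUnavoidableConfig2 (G : SimpleGraph V) : Prop :=
  (∃ v₁ v₂ u₀ : V, InH2 G v₁ v₂ u₀ ∧
    ¬ (∃ x y, IsHat2 G v₁ v₂ u₀ x y) ∧
    ¬ (∃ x₁ x₂ x₃ x₄ x₅ x₆, IsDoubleHat2 G v₁ v₂ u₀ x₁ x₂ x₃ x₄ x₅ x₆)) ∨
  (∃ v₁ v₂ : V, G.Adj v₁ v₂ ∧ InT2 G v₁ v₂)

variable {G : SimpleGraph V} {G' : SimpleGraph W}

theorem SpecialBranch2.adj {a b u : V} (h : SpecialBranch2 G a b u) : G.Adj a b := by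
  rcases h with h | ⟨_, _, h⟩ | ⟨_, _, _, _, _, _, h⟩ <;> exact h.1

theorem SpecialBranch2.eq_of_not_hasUnavoidableConfig2 (hG : ¬ HasUnavoidableConfig2 G)
    {a b u w : V} (hu : SpecialBranch2 G a b u) (hw : SpecialBranch2 G a b w) : u = w := by
  by_contra hne
  exact hG (Or.inr ⟨a, b, hu.adj, u, w, hne, hu, hw⟩)

theorem InH2.specialBranch2 (hG : ¬ HasUnavoidableConfig2 G) {a b u : V} (h : InH2 G a b u) :
    SpecialBranch2 G a b u := by
  by_contra hs
  exact hG (Or.inl ⟨a, b, u, h, fun h' => hs (Or.inr (Or.inl h')),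
    fun h' => hs (Or.inr (Or.inr h'))⟩)

section Iso

variable (φ : G ≃g G')

theorem IsEar2.map {a b u : V} (h : IsEar2 G a b u) : IsEar2 G' (φ a) (φ b) (φ u) :=
  ⟨φ.map_adj_iff.2 h.1, by simp [← φ.image_neighborSet, h.2, Set.image_insert_eq]⟩

theorem IsHat2.map {a b u x y : V} (h : IsHat2 G a b u x y) :
    IsHat2 G' (φ a) (φ b) (φ u) (φ x) (φ y) := by
  obtain ⟨h, hu, hx, hy⟩ := h
  exact ⟨φ.map_adj_iff.2 h, by simp [← φ.image_neighborSet, hu, Set.image_insert_eq],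
    by simp [← φ.image_neighborSet, hx, Set.image_insert_eq],
    by simp [← φ.image_neighborSet, hy, Set.image_insert_eq]⟩

theorem IsDoubleHat2.map {a b u x₁ x₂ x₃ x₄ x₅ x₆ : V}
    (h : IsDoubleHat2 G a b u x₁ x₂ x₃ x₄ x₅ x₆) :
    IsDoubleHat2 G' (φ a) (φ b) (φ u) (φ x₁) (φ x₂) (φ x₃) (φ x₄) (φ x₅) (φ x₆) := by
  obtain ⟨h, hu, h₁, h₂, h₃, h₄, h₅, h₆⟩ := h
  refine ⟨φ.map_adj_iff.2 h, ?_, ?_, ?_, ?_, ?_, ?_, ?_⟩ <;>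
    simp [← φ.image_neighborSet, Set.image_insert_eq, *]

theorem SpecialBranch2.map {a b u : V} (h : SpecialBranch2 G a b u) :
    SpecialBranch2 G' (φ a) (φ b) (φ u) := by
  rcases h with h | ⟨x, y, h⟩ | ⟨x₁, x₂, x₃, x₄, x₅, x₆, h⟩
  · exact Or.inl (h.map φ)
  · exact Or.inr (Or.inl ⟨_, _, h.map φ⟩)
  · exact Or.inr (Or.inr ⟨_, _, _, _, _, _, h.map φ⟩)

theorem Side2Small.map {a u : V} (h : Side2Small G a u) : Side2Small G' (φ a) (φ u) := by
  rw [Side2Small, ← φ.image_neighborSet, ← φ.image_neighborSet, ← Set.image_inter φ.injective]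
  exact h.image φ

theorem Side2Branch.map {a b u : V} (h : Side2Branch G a b u) :
    Side2Branch G' (φ a) (φ b) (φ u) := by
  obtain ⟨w, hbw, hw, hs⟩ := h
  refine ⟨φ w, φ.injective.ne hbw, ?_, hs.map φ⟩
  rw [← φ.image_neighborSet, ← φ.image_neighborSet, ← Set.image_inter φ.injective, hw,
    Set.image_pair]

theorem InH2.map {a b u : V} (h : InH2 G a b u) : InH2 G' (φ a) (φ b) (φ u) := by
  obtain ⟨hab, hau, hbu, ha, hb, hab'⟩ := h
  exact ⟨φ.map_adj_iff.2 hab, φ.map_adj_iff.2 hau, φ.map_adj_iff.2 hbu,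
    ha.imp (Side2Small.map φ) (Side2Branch.map φ), hb.imp (Side2Small.map φ) (Side2Branch.map φ),
    hab'.imp (Side2Branch.map φ) (Side2Branch.map φ)⟩

theorem HasUnavoidableConfig2.map (h : HasUnavoidableConfig2 G) (φ : G ≃g G') :
    HasUnavoidableConfig2 G' := by
  rcases h with ⟨a, b, u, hH, hhat, hdh⟩ | ⟨a, b, hab, u, w, huw, hu, hw⟩
  · refine Or.inl ⟨φ a, φ b, φ u, hH.map φ, fun ⟨x, y, h⟩ => hhat ?_,
      fun ⟨x₁, x₂, x₃, x₄, x₅, x₆, h⟩ => hdh ?_⟩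
    · have h' := h.map φ.symm
      simp only [RelIso.symm_apply_apply] at h'
      exact ⟨_, _, h'⟩
    · have h' := h.map φ.symm
      simp only [RelIso.symm_apply_apply] at h'
      exact ⟨_, _, _, _, _, _, h'⟩
  · exact Or.inr ⟨φ a, φ b, φ.map_adj_iff.2 hab, φ u, φ w, φ.injective.ne huw, hu.map φ,
      hw.map φ⟩

end Iso

section AdditionOrdering

variable {n : ℕ} {H : SimpleGraph (Fin n)}

structure IsParentPair (H : SimpleGraph (Fin n)) (i a b : Fin n) : Prop where
  ne : a ≠ b
  left_lt : a < i
  right_lt : b < i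
  adj_left : H.Adj i a
  adj_right : H.Adj i b
  adj : H.Adj a b
  eq_or_eq : ∀ j < i, H.Adj i j → j = a ∨ j = b

theorem IsParentPair.symm {i a b : Fin n} (h : IsParentPair H i a b) : IsParentPair H i b a :=
  ⟨h.ne.symm, h.right_lt, h.left_lt, h.adj_right, h.adj_left, h.adj.symm,
    fun j hj hij => (h.eq_or_eq j hj hij).symm⟩

theorem two_le_val_of_lt_of_lt {i a b : Fin n} (hab : a ≠ b) (ha : a < i) (hb : b < i) :
    2 ≤ i.val := by
  have := Fin.val_ne_of_ne hab
  rw [Fin.lt_def] at ha hb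
  omega

theorem IsParentPair.exists_coparent {i a b j : Fin n} (h : IsParentPair H i a b) (hj : j < i)
    (hij : H.Adj i j) : ∃ o < i, H.Adj i o ∧ H.Adj j o := by
  rcases h.eq_or_eq j hj hij with rfl | rfl
  · exact ⟨b, h.right_lt, h.adj_right, h.adj⟩
  · exact ⟨a, h.left_lt, h.adj_left, h.adj.symm⟩

theorem IsAdditionOrdering.exists_isParentPair (hH : IsAdditionOrdering 2 H) {i : Fin n}
    (hi : 2 ≤ i.val) : ∃ a b, IsParentPair H i a b := by
  rcases hi.eq_or_lt with hi | hi
  · refine ⟨⟨0, by omega⟩, ⟨1, by omega⟩, by simp, by simp [Fin.lt_def, ← hi],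
      by simp [Fin.lt_def, ← hi], hH.1 _ _ (by omega) (by simp) (by simp [Fin.ext_iff]; omega),
      hH.1 _ _ (by omega) (by simp) (by simp [Fin.ext_iff]; omega),
      hH.1 _ _ (by simp) (by simp) (by simp), fun j hj _ => ?_⟩
    simp only [Fin.lt_def, ← hi] at hj
    simp only [Fin.ext_iff]
    omega
  · have hcl := hH.2 i hi
    obtain ⟨a, b, hab, hs⟩ := Finset.card_eq_two.mp hcl.card_eq
    have mem : ∀ j, j < i ∧ H.Adj i j ↔ j = a ∨ j = b := fun j => by
      simpa using congrArg (j ∈ ·) hs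
    obtain ⟨hai, hia⟩ := (mem a).2 (Or.inl rfl)
    obtain ⟨hbi, hib⟩ := (mem b).2 (Or.inr rfl)
    exact ⟨a, b, hab, hai, hbi, hia, hib, hcl.isClique (by simp [hs]) (by simp [hs]) hab,
      fun j hj hij => (mem j).1 ⟨hj, hij⟩⟩

theorem IsAdditionOrdering.isParentPair (hH : IsAdditionOrdering 2 H) {i a b : Fin n}
    (hab : a ≠ b) (ha : a < i) (hb : b < i) (hia : H.Adj i a) (hib : H.Adj i b) :
    IsParentPair H i a b := by
  obtain ⟨c, d, h⟩ := hH.exists_isParentPair (two_le_val_of_lt_of_lt hab ha hb)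
  rcases h.eq_or_eq a ha hia with rfl | rfl <;> rcases h.eq_or_eq b hb hib with rfl | rfl
  exacts [absurd rfl hab, h, h.symm, absurd rfl hab]

theorem IsAdditionOrdering.comap_perm {k : ℕ} (hH : IsAdditionOrdering k H)
    (σ : Equiv.Perm (Fin n)) (hσ : ∀ j : Fin n, k + 1 ≤ j.val → σ j = j) :
    IsAdditionOrdering k (H.comap σ) := by
  have lt_of_lt : ∀ j : Fin n, j.val < k + 1 → (σ j).val < k + 1 := fun j hj => by
    by_contra h
    have := σ.injective (hσ (σ j) (by omega))
    omega
  refine ⟨fun i j hi hj hij => hH.1 _ _ (lt_of_lt i hi) (lt_of_lt j hj) (σ.injective.ne hij),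
    fun i hi => ?_⟩
  have hσi := hσ i hi
  have lt_iff : ∀ j, σ j < i ↔ j < i := fun j => by
    by_cases hj : j.val < k + 1
    · have := lt_of_lt j hj
      simp only [Fin.lt_def]
      omega
    · rw [hσ j (by omega)]
  have hcl := hH.2 i hi
  have hmap : (H.comap σ).IsNClique k
      ((Finset.univ.filter fun j => j < i ∧ H.Adj i j).map σ.symm.toEmbedding) := by
    refine ⟨fun x hx y hy hxy => ?_, by rw [Finset.card_map, hcl.card_eq]⟩
    simp only [Finset.coe_map, Equiv.coe_toEmbedding, Set.mem_image, Finset.mem_coe] at hx hy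
    obtain ⟨x, hx, rfl⟩ := hx
    obtain ⟨y, hy, rfl⟩ := hy
    simpa using hcl.isClique hx hy (fun h => hxy (by rw [h]))
  convert hmap using 1
  ext j
  simp [Finset.mem_map_equiv, lt_iff, hσi]

theorem val_swap_two_lt_two {t j : Fin n} (h2 : 2 < n) (ht : t.val < 3) (hj : j.val < 3)
    (hjt : j.val ≠ t.val) : (Equiv.swap t ⟨2, h2⟩ j).val < 2 := by
  rw [Equiv.swap_apply_def]
  split_ifs with h₁ h₂
  · exact absurd (Fin.val_eq_of_eq h₁) hjt
  · have := Fin.val_eq_of_eq h₂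
    simp only at this ⊢
    omega
  · have := Fin.val_ne_of_ne h₂
    simp only at this
    omega

theorem IsAdditionOrdering.exists_perm_isParentPair_ne (hH : IsAdditionOrdering 2 H)
    (hn : 4 ≤ n) : ∃ σ : Equiv.Perm (Fin n), IsAdditionOrdering 2 (H.comap σ) ∧
      ∃ i j a b, i ≠ j ∧ IsParentPair (H.comap σ) i a b ∧ IsParentPair (H.comap σ) j a b := by
  obtain ⟨c, d, hP⟩ := hH.exists_isParentPair (i := ⟨3, by omega⟩) le_add_self
  have hc := hP.left_lt
  have hd := hP.right_lt
  have hcd := Fin.val_ne_of_ne hP.ne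
  simp only [Fin.lt_def] at hc hd
  obtain ⟨t, ht, htc, htd⟩ : ∃ t : Fin n, t.val < 3 ∧ t.val ≠ c.val ∧ t.val ≠ d.val := by
    by_contra! h
    have h0 := h ⟨0, by omega⟩ (by simp)
    have h1 := h ⟨1, by omega⟩ (by simp)
    have h2 := h ⟨2, by omega⟩ (by simp)
    simp only at h0 h1 h2
    omega
  -- `σ` moves the vertex of the first triangle that is not a parent of the fourth vertex to
  -- position 2, so that the third and the fourth vertex both get the parents `σ c, σ d`.
  set σ := Equiv.swap t ⟨2, by omega⟩
  have hσ : ∀ j : Fin n, 3 ≤ j.val → σ j = j := fun j hj =>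
    Equiv.swap_apply_of_ne_of_ne (by rintro rfl; omega) (by rintro rfl; simp at hj)
  have hH' := hH.comap_perm σ hσ
  have hσc : (σ c).val < 2 := val_swap_two_lt_two (by omega) ht (by omega) (Ne.symm htc)
  have hσd : (σ d).val < 2 := val_swap_two_lt_two (by omega) ht (by omega) (Ne.symm htd)
  have hσσ : ∀ j, σ (σ j) = j := Equiv.swap_apply_self _ _
  have hne : σ c ≠ σ d := σ.injective.ne hP.ne
  refine ⟨σ, hH', ⟨2, by omega⟩, ⟨3, by omega⟩, σ c, σ d, by simp, ?_, ?_⟩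
  · exact hH'.isParentPair hne (Fin.lt_def.2 hσc) (Fin.lt_def.2 hσd)
      (hH'.1 _ _ (by simp) (by omega) (by simp [Fin.ext_iff]; omega))
      (hH'.1 _ _ (by simp) (by omega) (by simp [Fin.ext_iff]; omega))
  · refine hH'.isParentPair hne (Fin.lt_def.2 (by simp; omega)) (Fin.lt_def.2 (by simp; omega))
      ?_ ?_ <;> simp only [comap_adj, hσ ⟨3, by omega⟩ le_rfl, hσσ]
    exacts [hP.adj_left, hP.adj_right]

theorem IsParentPair.lt_of_adj {i a b w : Fin n} (h : IsParentPair H i a b) (hiw : H.Adj i w)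
    (haw : H.Adj a w) (hwb : w ≠ b) : i < w := by
  rcases lt_trichotomy w i with hwi | rfl | hwi
  · rcases h.eq_or_eq w hwi hiw with rfl | rfl
    exacts [absurd haw (H.loopless.irrefl _), absurd rfl hwb]
  · exact absurd hiw (H.loopless.irrefl _)
  · exact hwi

theorem IsAdditionOrdering.neighborSet_eq_of_isParentPair (hH : IsAdditionOrdering 2 H)
    {i a b : Fin n} (h : IsParentPair H i a b) (ha : ∀ w, H.Adj i w → H.Adj a w → w = b)
    (hb : ∀ w, H.Adj i w → H.Adj b w → w = a) : H.neighborSet i = {a, b} := by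
  suffices key : ∀ w, H.Adj i w → w = a ∨ w = b by
    ext w
    exact ⟨key w, by rintro (rfl | rfl); exacts [h.adj_left, h.adj_right]⟩
  intro w
  induction w using WellFoundedLT.induction with
  | _ w IH =>
  intro hiw
  rcases lt_or_gt_of_ne (H.ne_of_adj hiw).symm with hwi | hwi
  · exact h.eq_or_eq w hwi hiw
  -- A later neighbour `w` of `i` has a second parent `o`, which is a neighbour of `i` before `w`.
  have hi := two_le_val_of_lt_of_lt h.ne h.left_lt h.right_lt
  obtain ⟨c, d, hw⟩ := hH.exists_isParentPair (hi.trans (Fin.lt_def.1 hwi).le)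
  obtain ⟨o, how, hwo, hio⟩ := hw.exists_coparent hwi hiw.symm
  rcases IH o how hio with rfl | rfl
  · exact absurd (ha w hiw hwo.symm) (h.right_lt.trans hwi).ne'
  · exact absurd (hb w hiw hwo.symm) (h.left_lt.trans hwi).ne'

theorem IsAdditionOrdering.forall_eq_or_side2Branch (hH : IsAdditionOrdering 2 H)
    (hG : ¬ HasUnavoidableConfig2 H) {i a b : Fin n} (h : IsParentPair H i a b)
    (hlater : ∀ w, i < w → ∀ c d, IsParentPair H w c d → SpecialBranch2 H c d w) :
    (∀ w, H.Adj i w → H.Adj a w → w = b) ∨ Side2Branch H a b i := by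
  have special : ∀ w, H.Adj i w → H.Adj a w → w ≠ b → SpecialBranch2 H a i w := by
    intro w hiw haw hwb
    have hlt := h.lt_of_adj hiw haw hwb
    exact hlater w hlt a i (hH.isParentPair (H.ne_of_adj h.adj_left).symm (h.left_lt.trans hlt)
      hlt haw.symm hiw.symm)
  by_cases hu : ∃ u, H.Adj i u ∧ H.Adj a u ∧ u ≠ b
  · obtain ⟨u, hiu, hau, hub⟩ := hu
    refine Or.inr ⟨u, hub.symm, Set.ext fun w => ?_, special u hiu hau hub⟩
    simp only [Set.mem_inter_iff, mem_neighborSet, Set.mem_insert_iff, Set.mem_singleton_iff]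
    constructor
    · rintro ⟨hiw, haw⟩
      by_cases hwb : w = b
      · exact Or.inl hwb
      · exact Or.inr ((special w hiw haw hwb).eq_of_not_hasUnavoidableConfig2 hG
          (special u hiu hau hub))
    · rintro (rfl | rfl)
      exacts [⟨h.adj_right, h.adj⟩, ⟨hiu, hau⟩]
  · push Not at hu
    exact Or.inl hu

theorem IsAdditionOrdering.specialBranch2_of_isParentPair (hH : IsAdditionOrdering 2 H)
    (hG : ¬ HasUnavoidableConfig2 H) {i a b : Fin n} (h : IsParentPair H i a b) :
    SpecialBranch2 H a b i := by
  induction i using WellFoundedGT.induction generalizing a b with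
  | _ i IH =>
  have side := fun {a b} (h : IsParentPair H i a b) =>
    hH.forall_eq_or_side2Branch hG h fun w hw c d => IH w hw
  have small : ∀ {a b}, (∀ w, H.Adj i w → H.Adj a w → w = b) → Side2Small H a i :=
    fun hab x hx y hy => (hab x hx.1 hx.2).trans (hab y hy.1 hy.2).symm
  have inH2 := fun ha hb hab =>
    InH2.specialBranch2 hG ⟨h.adj, h.adj_left.symm, h.adj_right.symm, ha, hb, hab⟩
  rcases side h with ha | ha <;> rcases side h.symm with hb | hb
  · exact Or.inl ⟨h.adj, hH.neighborSet_eq_of_isParentPair h ha hb⟩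
  · exact inH2 (Or.inl (small ha)) (Or.inr hb) (Or.inr hb)
  · exact inH2 (Or.inr ha) (Or.inl (small hb)) (Or.inl ha)
  · exact inH2 (Or.inr ha) (Or.inr hb) (Or.inl ha)

theorem IsAdditionOrdering.eq_of_isParentPair (hH : IsAdditionOrdering 2 H)
    (hG : ¬ HasUnavoidableConfig2 H) {i j a b : Fin n} (hi : IsParentPair H i a b)
    (hj : IsParentPair H j a b) : i = j :=
  (hH.specialBranch2_of_isParentPair hG hi).eq_of_not_hasUnavoidableConfig2 hG
    (hH.specialBranch2_of_isParentPair hG hj)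

theorem IsAdditionOrdering.hasUnavoidableConfig2 (hH : IsAdditionOrdering 2 H) (hn : 4 ≤ n) :
    HasUnavoidableConfig2 H := by
  obtain ⟨σ, hσ, i, j, a, b, hij, hi, hj⟩ := hH.exists_perm_isParentPair_ne hn
  by_contra hG
  exact hij (hσ.eq_of_isParentPair (fun h => hG (h.map (Iso.comap σ H))) hi hj)

end AdditionOrdering

end Unavoidable

/-- Every 2-tree of order at least 4 contains a configuration in
`𝓗⁽²⁾(G) ∪ 𝓣⁽²⁾(G)` that is neither a hat nor a double hat of `G`. -/
theorem two_tree_unavoidable {V : Type*} [Fintype V] (G : SimpleGraph V)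
    (hG : IsKTree 2 G) (hcard : 4 ≤ Fintype.card V) :
    (∃ v₁ v₂ u₀ : V, InH2 G v₁ v₂ u₀ ∧
      ¬ (∃ x y, IsHat2 G v₁ v₂ u₀ x y) ∧
      ¬ (∃ x₁ x₂ x₃ x₄ x₅ x₆, IsDoubleHat2 G v₁ v₂ u₀ x₁ x₂ x₃ x₄ x₅ x₆)) ∨
    (∃ v₁ v₂ : V, G.Adj v₁ v₂ ∧ InT2 G v₁ v₂) := by
  obtain ⟨-, e, hord⟩ := hG
  exact (hord.hasUnavoidableConfig2 hcard).map (Iso.comap e.symm G)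
end

section
/- Extension lemma for 2-trees: Let G be a 2-tree with a branch B = B({v₁,v₂},u₀) that is an ear, a hat, or a double hat of G, and let G' = G − (V(B)∖{v₁,v₂}). If G' admits an odd 4-coloring φ', then φ' extends to a proper 4-coloring of G in which every vertex other than v₁ has a color appearing an odd number of times among its neighbors. -/
open SimpleGraph Finset
open scoped Classical

/-!
Write `p = φ' v₁`, `q = φ' v₂`, and let `c` be a colour that `v₂` sees an odd number of times in
`G - S`. Colour the branch greedily, avoiding `c` on the branch neighbours of `v₂`, so that every
branch vertex sees some colour exactly once. Then `v₂` still sees `c` an odd number of times, and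
every other vertex outside the branch has the same coloured neighbourhood as in `G - S`.

The neighbourhood equations do not make the named vertices distinct. If `v₁ ≠ u₂` they are
distinct; if `v₁ = u₂` then `u₁ = v₂`, so the branch is closed under adjacency and consists of the
triangle `v₁ v₂ u₀` together with an independent set attached to it, which is coloured directly.
-/

section Extension

variable {V : Type*} [Fintype V] {G : SimpleGraph V} {α : Type*} {m : ℕ}

def IsOddExtension (G : SimpleGraph V) (S : Finset V) (v : V) (φ' φ : V → α) : Prop :=
  (∀ x ∉ S, φ x = φ' x) ∧ ProperColoring G φ ∧ ∀ x, x ≠ v → (∃ u, G.Adj x u) → OddAt G φ x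

theorem oddAt_of_unique_color {φ : V → α} {x w : V} (hw : G.Adj x w)
    (huniq : ∀ y, G.Adj x y → φ y = φ w → y = w) : OddAt G φ x := by
  refine ⟨φ w, ?_⟩
  rw [colorCount, card_eq_one.2 ⟨w, ?_⟩]
  · exact odd_one
  ext y
  simp only [mem_filter, mem_univ, true_and, mem_singleton]
  exact ⟨fun h => huniq y h.1 h.2, by rintro rfl; exact ⟨hw, rfl⟩⟩

theorem colorCount_eq_colorCount_graphDel {S : Finset V} {φ' φ : V → α}
    (hagree : ∀ y ∉ S, φ y = φ' y) {x : V} (hx : x ∉ S) {c : α}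
    (hc : ∀ s ∈ S, G.Adj x s → φ s ≠ c) :
    colorCount G φ x c = colorCount (GraphDel G ↑S) φ' x c := by
  unfold colorCount
  congr 1
  ext y
  simp only [mem_filter, mem_univ, true_and, GraphDel, mem_coe]
  by_cases hy : y ∈ S
  · simpa [hy] using hc y hy
  · simp [hagree y hy, hx, hy]

theorem oddAt_of_odd_colorCount_graphDel {S : Finset V} {φ' φ : V → α}
    (hagree : ∀ y ∉ S, φ y = φ' y) {x : V} (hx : x ∉ S) {c : α}
    (hodd : Odd (colorCount (GraphDel G ↑S) φ' x c)) (hc : ∀ s ∈ S, G.Adj x s → φ s ≠ c) :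
    OddAt G φ x :=
  ⟨c, colorCount_eq_colorCount_graphDel hagree hx hc ▸ hodd⟩

theorem IsOddExtension.of_near {S : Finset V} {v : V} {φ' φ : V → Fin m}
    (hφ' : IsOddColoring (GraphDel G ↑S) m φ') (hagree : ∀ x ∉ S, φ x = φ' x)
    (hproper : ∀ s ∈ S, ∀ w, G.Adj s w → φ s ≠ φ w)
    (hodd : ∀ x, x ≠ v → (∃ u, G.Adj x u) → (x ∈ S ∨ ∃ s ∈ S, G.Adj x s) → OddAt G φ x) :
    IsOddExtension G S v φ' φ := by
  refine ⟨hagree, fun x y hxy => ?_, fun x hxv hx => ?_⟩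
  · by_cases hxS : x ∈ S
    · exact hproper x hxS y hxy
    by_cases hyS : y ∈ S
    · exact (hproper y hyS x hxy.symm).symm
    rw [hagree x hxS, hagree y hyS]
    exact hφ'.1 x y ⟨hxy, hxS, hyS⟩
  by_cases hnear : x ∈ S ∨ ∃ s ∈ S, G.Adj x s
  · exact hodd x hxv hx hnear
  simp only [not_or, not_exists, not_and] at hnear
  obtain ⟨hxS, hfar⟩ := hnear
  obtain ⟨u, hu⟩ := hx
  obtain ⟨c, hc⟩ := hφ'.2 x ⟨u, hu, hxS, fun huS => hfar u huS hu⟩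
  exact oddAt_of_odd_colorCount_graphDel hagree hxS hc fun s hs h => absurd h (hfar s hs)

theorem exists_isOddExtension_of_closed {S : Finset V} {a b c : V} (v : V)
    (hab : G.Adj a b) (hac : G.Adj a c) (hbc : G.Adj b c) (ha : a ∈ S) (hb : b ∈ S) (hc : c ∈ S)
    (hclosed : ∀ s ∈ S, ∀ w, G.Adj s w → w ∈ S)
    (hrest : ∀ s ∈ S, ∀ w, G.Adj s w → s = a ∨ s = b ∨ s = c ∨ w = a ∨ w = b ∨ w = c)
    {φ' : V → Fin 4} (hφ' : IsOddColoring (GraphDel G ↑S) 4 φ') :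
    ∃ φ, IsOddExtension G S v φ' φ := by
  -- only the triangle uses `0, 1, 2`, once each, so every vertex of `S` sees one of them once
  set φ : V → Fin 4 := fun x =>
    if x = a then 0 else if x = b then 1 else if x = c then 2 else if x ∈ S then 3 else φ' x
  have hφ : φ a = 0 ∧ φ b = 1 ∧ φ c = 2 ∧ ∀ x ∈ S, x ≠ a → x ≠ b → x ≠ c → φ x = 3 := by
    simp +contextual [φ, hab.ne', hac.ne', hbc.ne']
  have hsymm : ∀ x y, G.Adj x y ↔ G.Adj y x := G.adj_comm
  have hirr : ∀ x, ¬ G.Adj x x := fun _ => G.irrefl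
  refine ⟨φ, IsOddExtension.of_near hφ' (fun x hx => ?_) ?_ ?_⟩
  · have hxa : x ≠ a := by rintro rfl; exact hx ha
    have hxb : x ≠ b := by rintro rfl; exact hx hb
    have hxc : x ≠ c := by rintro rfl; exact hx hc
    simp [φ, hxa, hxb, hxc, hx]
  · intro s hs w hw
    have := hclosed s hs w hw
    have := hrest s hs w hw
    grind
  · intro x _ ⟨u, hu⟩ hnear
    have hxS : x ∈ S := hnear.elim id fun ⟨s, hs, hxs⟩ => hclosed s hs x hxs.symm
    have hunique : ∀ y ∈ S, ∀ z ∈ S, φ y = φ z → (y = a ∨ y = b ∨ y = c) → y = z := by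
      grind
    obtain ⟨w, hxw, hwT⟩ : ∃ w, G.Adj x w ∧ (w = a ∨ w = b ∨ w = c) := by
      rcases hrest x hxS u hu with rfl | rfl | rfl | hw
      · exact ⟨b, hab, by simp⟩
      · exact ⟨a, hab.symm, by simp⟩
      · exact ⟨a, hac.symm, by simp⟩
      · exact ⟨u, hu, hw⟩
    exact oddAt_of_unique_color hxw fun y hy hyw =>
      (hunique w (hclosed x hxS w hxw) y (hclosed x hxS y hy) hyw.symm hwT).symm

end Extension

theorem Fin.exists_ne_of_three (a b c : Fin 4) : ∃ d, d ≠ a ∧ d ≠ b ∧ d ≠ c := by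
  revert a b c
  decide

theorem IsEar2.exists_isOddExtension {V : Type*} [Fintype V] [DecidableEq V] {G : SimpleGraph V}
    {φ' : V → Fin 4} {v₁ v₂ u₀ : V} (h : IsEar2 G v₁ v₂ u₀)
    (hφ' : IsOddColoring (GraphDel G ↑({u₀} : Finset V)) 4 φ') :
    ∃ φ, IsOddExtension G {u₀} v₁ φ' φ := by
  obtain ⟨h12, hN0⟩ := h
  simp only [Set.ext_iff, mem_neighborSet, Set.mem_insert_iff, Set.mem_singleton_iff] at hN0
  have hv₁ : v₁ ∉ ({u₀} : Finset V) := by simpa using ((hN0 v₁).2 (.inl rfl)).ne'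
  have hv₂ : v₂ ∉ ({u₀} : Finset V) := by simpa using ((hN0 v₂).2 (.inr rfl)).ne'
  have hdel : (GraphDel G ↑({u₀} : Finset V)).Adj v₁ v₂ := ⟨h12, hv₁, hv₂⟩
  have hpq : φ' v₁ ≠ φ' v₂ := hφ'.1 v₁ v₂ hdel
  obtain ⟨c, hc⟩ := hφ'.2 v₂ ⟨v₁, hdel.symm⟩
  obtain ⟨a, hap, haq, hac⟩ := Fin.exists_ne_of_three (φ' v₁) (φ' v₂) c
  set φ : V → Fin 4 := fun x => if x = u₀ then a else φ' x
  have hagree : ∀ x ∉ ({u₀} : Finset V), φ x = φ' x := by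
    intro x hx; simp_all [φ]
  refine ⟨φ, IsOddExtension.of_near hφ' hagree ?_ ?_⟩
  · intro s hs w hw
    rw [mem_singleton] at hs
    subst hs
    rcases (hN0 w).1 hw with rfl | rfl <;> simp_all [φ]
  · intro x hx₁ _ hnear
    by_cases hx₂ : x = v₂
    · subst x
      refine oddAt_of_odd_colorCount_graphDel hagree hv₂ hc fun s hs _ => ?_
      simp_all [φ]
    obtain rfl : x = u₀ := by
      simp only [mem_singleton, exists_eq_left] at hnear
      exact hnear.resolve_right fun h => by rcases (hN0 x).1 h.symm with rfl | rfl <;> contradiction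
    refine oddAt_of_unique_color ((hN0 v₁).2 (.inl rfl)) fun y hy hyc => ?_
    rcases (hN0 y).1 hy with rfl | rfl
    · rfl
    · simp_all [φ]

section Hat

variable {V : Type*} {G : SimpleGraph V} {v₁ v₂ u₀ u₁ u₂ : V}

theorem IsHat2.adj_iff (h : IsHat2 G v₁ v₂ u₀ u₁ u₂) :
    (∀ x, G.Adj u₀ x ↔ x = v₁ ∨ x = v₂ ∨ x = u₁ ∨ x = u₂) ∧
    (∀ x, G.Adj u₁ x ↔ x = v₁ ∨ x = u₀) ∧ (∀ x, G.Adj u₂ x ↔ x = v₂ ∨ x = u₀) := by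
  obtain ⟨-, hN⟩ := h
  simpa only [Set.ext_iff, mem_neighborSet, Set.mem_insert_iff, Set.mem_singleton_iff] using hN

theorem IsHat2.eq_of_eq (h : IsHat2 G v₁ v₂ u₀ u₁ u₂) (hv : v₁ = u₂) : u₁ = v₂ := by
  obtain ⟨hN0, hN1, hN2⟩ := h.adj_iff
  have h₂₁ : G.Adj u₂ u₁ := hv ▸ ((hN1 v₁).2 (.inl rfl)).symm
  rcases (hN2 u₁).1 h₂₁ with h | h
  · exact h
  · exact absurd h ((hN0 u₁).2 (by simp)).ne'

theorem IsHat2.nodup (h : IsHat2 G v₁ v₂ u₀ u₁ u₂) (hv : v₁ ≠ u₂) :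
    [v₁, v₂, u₀, u₁, u₂].Nodup := by
  have := h.1
  obtain ⟨hN0, hN1, hN2⟩ := h.adj_iff
  have hedges : G.Adj u₀ v₁ ∧ G.Adj u₀ v₂ ∧ G.Adj u₀ u₁ ∧ G.Adj u₀ u₂ ∧ G.Adj u₁ v₁ ∧
      G.Adj u₂ v₂ := by
    simp [hN0, hN1, hN2]
  have hsymm : ∀ x y, G.Adj x y ↔ G.Adj y x := G.adj_comm
  have hirr : ∀ x, ¬ G.Adj x x := fun _ => G.irrefl
  simp only [List.nodup_cons, List.mem_cons, List.not_mem_nil, not_or, or_false, List.nodup_nil,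
    and_true, not_false_eq_true]
  and_intros <;> grind

variable [Fintype V] [DecidableEq V] {φ' : V → Fin 4}

theorem IsHat2.exists_isOddExtension_of_eq (h : IsHat2 G v₁ v₂ u₀ u₁ u₂) (hv : v₁ = u₂)
    (hφ' : IsOddColoring (GraphDel G ↑({u₀, u₁, u₂} : Finset V)) 4 φ') :
    ∃ φ, IsOddExtension G {u₀, u₁, u₂} v₁ φ' φ := by
  have hu := h.eq_of_eq hv
  subst hv hu
  obtain ⟨hN0, hN1, hN2⟩ := h.adj_iff
  refine exists_isOddExtension_of_closed v₁ h.1 ((hN2 u₀).2 (by simp)) ((hN1 u₀).2 (by simp))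
    (by simp) (by simp) (by simp) ?_ ?_ hφ'
  · intro s hs w hw
    simp only [mem_insert, mem_singleton] at hs ⊢
    grind
  · intro s hs _ _
    simp only [mem_insert, mem_singleton] at hs
    tauto

theorem IsHat2.exists_isOddExtension_of_ne (h : IsHat2 G v₁ v₂ u₀ u₁ u₂) (hv : v₁ ≠ u₂)
    (hφ' : IsOddColoring (GraphDel G ↑({u₀, u₁, u₂} : Finset V)) 4 φ') :
    ∃ φ, IsOddExtension G {u₀, u₁, u₂} v₁ φ' φ := by
  have hnd := h.nodup hv
  simp only [List.nodup_cons, List.mem_cons, List.not_mem_nil, not_or, or_false, List.nodup_nil,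
    and_true, not_false_eq_true] at hnd
  obtain ⟨hN0, hN1, hN2⟩ := h.adj_iff
  set S : Finset V := {u₀, u₁, u₂}
  have hv₁ : v₁ ∉ S := by simp only [S, mem_insert, mem_singleton]; tauto
  have hv₂ : v₂ ∉ S := by simp only [S, mem_insert, mem_singleton]; tauto
  have hdel : (GraphDel G ↑S).Adj v₁ v₂ := ⟨h.1, hv₁, hv₂⟩
  have hpq : φ' v₁ ≠ φ' v₂ := hφ'.1 v₁ v₂ hdel
  obtain ⟨c, hc⟩ := hφ'.2 v₂ ⟨v₁, hdel.symm⟩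
  obtain ⟨a, hap, haq, hac⟩ := Fin.exists_ne_of_three (φ' v₁) (φ' v₂) c
  obtain ⟨d, hdp, hdq, hda⟩ := Fin.exists_ne_of_three (φ' v₁) (φ' v₂) a
  obtain ⟨e, heq, hea, hec⟩ := Fin.exists_ne_of_three (φ' v₂) a c
  set φ : V → Fin 4 := fun x =>
    if x = u₀ then a else if x = u₁ then d else if x = u₂ then e else φ' x
  have hagree : ∀ x ∉ S, φ x = φ' x := by
    intro x hx; simp_all [S, φ]
  have hφ : φ v₁ = φ' v₁ ∧ φ v₂ = φ' v₂ ∧ φ u₀ = a ∧ φ u₁ = d ∧ φ u₂ = e :=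
    ⟨hagree v₁ hv₁, hagree v₂ hv₂, by grind⟩
  refine ⟨φ, IsOddExtension.of_near hφ' hagree ?_ ?_⟩
  · intro s hs w hw
    simp only [S, mem_insert, mem_singleton] at hs
    grind
  · intro x hx₁ _ hnear
    by_cases hx₂ : x = v₂
    · subst x
      refine oddAt_of_odd_colorCount_graphDel hagree hv₂ hc fun s hs hs₂ => ?_
      simp only [S, mem_insert, mem_singleton] at hs
      have := hs₂.symm
      grind
    have hxS : x ∈ S := by
      simp only [S, mem_insert, mem_singleton, exists_eq_or_imp, exists_eq_left, G.adj_comm x,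
        hN0, hN1, hN2] at hnear ⊢
      tauto
    simp only [S, mem_insert, mem_singleton] at hxS
    rcases hxS with rfl | rfl | rfl
    · exact oddAt_of_unique_color ((hN0 v₂).2 (by simp)) (by grind)
    · exact oddAt_of_unique_color ((hN1 u₀).2 (by simp)) (by grind)
    · exact oddAt_of_unique_color ((hN2 u₀).2 (by simp)) (by grind)

theorem IsHat2.exists_isOddExtension (h : IsHat2 G v₁ v₂ u₀ u₁ u₂)
    (hφ' : IsOddColoring (GraphDel G ↑({u₀, u₁, u₂} : Finset V)) 4 φ') :
    ∃ φ, IsOddExtension G {u₀, u₁, u₂} v₁ φ' φ :=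
  (em (v₁ = u₂)).elim (h.exists_isOddExtension_of_eq · hφ') (h.exists_isOddExtension_of_ne · hφ')

end Hat

section DoubleHat

variable {V : Type*} {G : SimpleGraph V} {v₁ v₂ u₀ u₁ u₂ u₃ u₄ u₅ u₆ : V}

theorem IsDoubleHat2.adj_iff (h : IsDoubleHat2 G v₁ v₂ u₀ u₁ u₂ u₃ u₄ u₅ u₆) :
    (∀ x, G.Adj u₀ x ↔ x = v₁ ∨ x = v₂ ∨ x = u₁ ∨ x = u₂ ∨ x = u₄ ∨ x = u₅) ∧
    (∀ x, G.Adj u₁ x ↔ x = v₁ ∨ x = u₀ ∨ x = u₃ ∨ x = u₄) ∧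
    (∀ x, G.Adj u₂ x ↔ x = v₂ ∨ x = u₀ ∨ x = u₅ ∨ x = u₆) ∧
    (∀ x, G.Adj u₃ x ↔ x = v₁ ∨ x = u₁) ∧ (∀ x, G.Adj u₄ x ↔ x = u₀ ∨ x = u₁) ∧
    (∀ x, G.Adj u₅ x ↔ x = u₀ ∨ x = u₂) ∧ (∀ x, G.Adj u₆ x ↔ x = v₂ ∨ x = u₂) := by
  obtain ⟨-, hN⟩ := h
  simpa only [Set.ext_iff, mem_neighborSet, Set.mem_insert_iff, Set.mem_singleton_iff] using hN

theorem IsDoubleHat2.adj (h : IsDoubleHat2 G v₁ v₂ u₀ u₁ u₂ u₃ u₄ u₅ u₆) :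
    G.Adj u₀ v₁ ∧ G.Adj u₀ v₂ ∧ G.Adj u₀ u₁ ∧ G.Adj u₀ u₂ ∧ G.Adj u₀ u₄ ∧ G.Adj u₀ u₅ ∧
      G.Adj u₁ v₁ ∧ G.Adj u₁ u₃ ∧ G.Adj u₁ u₄ ∧ G.Adj u₂ v₂ ∧ G.Adj u₂ u₅ ∧ G.Adj u₂ u₆ ∧
      G.Adj u₃ v₁ ∧ G.Adj u₆ v₂ := by
  obtain ⟨hN0, hN1, hN2, hN3, -, -, hN6⟩ := h.adj_iff
  simp [hN0, hN1, hN2, hN3, hN6]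

theorem IsDoubleHat2.eq_of_eq (h : IsDoubleHat2 G v₁ v₂ u₀ u₁ u₂ u₃ u₄ u₅ u₆) (hv : v₁ = u₂) :
    u₁ = v₂ := by
  have := h.adj_iff
  have := h.adj
  have hsymm : ∀ x y, G.Adj x y ↔ G.Adj y x := G.adj_comm
  have hirr : ∀ x, ¬ G.Adj x x := fun _ => G.irrefl
  grind

theorem IsDoubleHat2.nodup (h : IsDoubleHat2 G v₁ v₂ u₀ u₁ u₂ u₃ u₄ u₅ u₆) (hv : v₁ ≠ u₂) :
    [v₁, v₂, u₀, u₁, u₂, u₃, u₄, u₅, u₆].Nodup := by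
  have := h.1
  have := h.adj_iff
  have := h.adj
  have hsymm : ∀ x y, G.Adj x y ↔ G.Adj y x := G.adj_comm
  have hirr : ∀ x, ¬ G.Adj x x := fun _ => G.irrefl
  simp only [List.nodup_cons, List.mem_cons, List.not_mem_nil, not_or, or_false, List.nodup_nil,
    and_true, not_false_eq_true]
  and_intros <;> grind

variable [Fintype V] [DecidableEq V] {φ' : V → Fin 4}

theorem IsDoubleHat2.exists_isOddExtension_of_eq (h : IsDoubleHat2 G v₁ v₂ u₀ u₁ u₂ u₃ u₄ u₅ u₆)
    (hv : v₁ = u₂)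
    (hφ' : IsOddColoring (GraphDel G ↑({u₀, u₁, u₂, u₃, u₄, u₅, u₆} : Finset V)) 4 φ') :
    ∃ φ, IsOddExtension G {u₀, u₁, u₂, u₃, u₄, u₅, u₆} v₁ φ' φ := by
  have hu := h.eq_of_eq hv
  subst hv hu
  obtain ⟨hN0, hN1, hN2, hN3, hN4, hN5, hN6⟩ := h.adj_iff
  refine exists_isOddExtension_of_closed v₁ h.1 ((hN2 u₀).2 (by simp)) ((hN1 u₀).2 (by simp))
    (by simp) (by simp) (by simp) ?_ ?_ hφ'
  · intro s hs w hw
    simp only [mem_insert, mem_singleton] at hs ⊢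
    grind
  · intro s hs w hw
    simp only [mem_insert, mem_singleton] at hs
    grind

theorem IsDoubleHat2.exists_isOddExtension_of_ne (h : IsDoubleHat2 G v₁ v₂ u₀ u₁ u₂ u₃ u₄ u₅ u₆)
    (hv : v₁ ≠ u₂)
    (hφ' : IsOddColoring (GraphDel G ↑({u₀, u₁, u₂, u₃, u₄, u₅, u₆} : Finset V)) 4 φ') :
    ∃ φ, IsOddExtension G {u₀, u₁, u₂, u₃, u₄, u₅, u₆} v₁ φ' φ := by
  have hnd := h.nodup hv
  simp only [List.nodup_cons, List.mem_cons, List.not_mem_nil, not_or, or_false, List.nodup_nil,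
    and_true, not_false_eq_true] at hnd
  obtain ⟨hN0, hN1, hN2, hN3, hN4, hN5, hN6⟩ := h.adj_iff
  set S : Finset V := {u₀, u₁, u₂, u₃, u₄, u₅, u₆}
  have hv₁ : v₁ ∉ S := by simp only [S, mem_insert, mem_singleton]; tauto
  have hv₂ : v₂ ∉ S := by simp only [S, mem_insert, mem_singleton]; tauto
  have hdel : (GraphDel G ↑S).Adj v₁ v₂ := ⟨h.1, hv₁, hv₂⟩
  have hpq : φ' v₁ ≠ φ' v₂ := hφ'.1 v₁ v₂ hdel
  obtain ⟨c, hc⟩ := hφ'.2 v₂ ⟨v₁, hdel.symm⟩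
  obtain ⟨a, hap, haq, hac⟩ := Fin.exists_ne_of_three (φ' v₁) (φ' v₂) c
  obtain ⟨d, hdp, hdq, hda⟩ := Fin.exists_ne_of_three (φ' v₁) (φ' v₂) a
  obtain ⟨e, heq, hea, hec⟩ := Fin.exists_ne_of_three (φ' v₂) a c
  obtain ⟨f, hfq, hfa, hfe⟩ := Fin.exists_ne_of_three (φ' v₂) a e
  set φ : V → Fin 4 := fun x =>
    if x = u₀ then a else if x = u₁ then d else if x = u₂ then e else if x = u₃ then φ' v₂ else
    if x = u₄ then φ' v₁ else if x = u₅ then f else if x = u₆ then a else φ' x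
  have hagree : ∀ x ∉ S, φ x = φ' x := by
    intro x hx; simp_all [S, φ]
  have hφ : φ v₁ = φ' v₁ ∧ φ v₂ = φ' v₂ ∧ φ u₀ = a ∧ φ u₁ = d ∧ φ u₂ = e ∧ φ u₃ = φ' v₂ ∧
      φ u₄ = φ' v₁ ∧ φ u₅ = f ∧ φ u₆ = a :=
    ⟨hagree v₁ hv₁, hagree v₂ hv₂, by grind⟩
  refine ⟨φ, IsOddExtension.of_near hφ' hagree ?_ ?_⟩
  · intro s hs w hw
    simp only [S, mem_insert, mem_singleton] at hs
    rcases hs with rfl | rfl | rfl | rfl | rfl | rfl | rfl <;> grind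
  · intro x hx₁ _ hnear
    by_cases hx₂ : x = v₂
    · subst x
      refine oddAt_of_odd_colorCount_graphDel hagree hv₂ hc fun s hs hs₂ => ?_
      simp only [S, mem_insert, mem_singleton] at hs
      have := hs₂.symm
      grind
    have hxS : x ∈ S := by
      simp only [S, mem_insert, mem_singleton, exists_eq_or_imp, exists_eq_left, G.adj_comm x,
        hN0, hN1, hN2, hN3, hN4, hN5, hN6] at hnear ⊢
      grind
    simp only [S, mem_insert, mem_singleton] at hxS
    rcases hxS with rfl | rfl | rfl | rfl | rfl | rfl | rfl
    · exact oddAt_of_unique_color ((hN0 v₂).2 (by simp)) (by grind)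
    · exact oddAt_of_unique_color ((hN1 u₀).2 (by simp)) (by grind)
    · exact oddAt_of_unique_color ((hN2 v₂).2 (by simp)) (by grind)
    · exact oddAt_of_unique_color ((hN3 v₁).2 (by simp)) (by grind)
    · exact oddAt_of_unique_color ((hN4 u₀).2 (by simp)) (by grind)
    · exact oddAt_of_unique_color ((hN5 u₀).2 (by simp)) (by grind)
    · exact oddAt_of_unique_color ((hN6 u₂).2 (by simp)) (by grind)

theorem IsDoubleHat2.exists_isOddExtension (h : IsDoubleHat2 G v₁ v₂ u₀ u₁ u₂ u₃ u₄ u₅ u₆)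
    (hφ' : IsOddColoring (GraphDel G ↑({u₀, u₁, u₂, u₃, u₄, u₅, u₆} : Finset V)) 4 φ') :
    ∃ φ, IsOddExtension G {u₀, u₁, u₂, u₃, u₄, u₅, u₆} v₁ φ' φ :=
  (em (v₁ = u₂)).elim (h.exists_isOddExtension_of_eq · hφ') (h.exists_isOddExtension_of_ne · hφ')

end DoubleHat

theorem two_tree_extension_general {V : Type*} [Fintype V] [DecidableEq V]
    (G : SimpleGraph V) (v₁ v₂ u₀ : V) (S : Finset V)
    (hB : (S = {u₀} ∧ IsEar2 G v₁ v₂ u₀) ∨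
      (∃ u₁ u₂, S = {u₀, u₁, u₂} ∧ IsHat2 G v₁ v₂ u₀ u₁ u₂) ∨
      (∃ u₁ u₂ u₃ u₄ u₅ u₆, S = {u₀, u₁, u₂, u₃, u₄, u₅, u₆} ∧
        IsDoubleHat2 G v₁ v₂ u₀ u₁ u₂ u₃ u₄ u₅ u₆))
    (φ' : V → Fin 4) (hφ' : IsOddColoring (GraphDel G ↑S) 4 φ') :
    ∃ φ : V → Fin 4, (∀ x ∉ S, φ x = φ' x) ∧ ProperColoring G φ ∧
      ∀ x : V, x ≠ v₁ → (∃ u, G.Adj x u) → OddAt G φ x := by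
  rcases hB with ⟨rfl, h⟩ | ⟨u₁, u₂, rfl, h⟩ | ⟨u₁, u₂, u₃, u₄, u₅, u₆, rfl, h⟩
  · exact h.exists_isOddExtension hφ'
  · exact h.exists_isOddExtension hφ'
  · exact h.exists_isOddExtension hφ'

/-- Extension lemma for 2-trees: if `B({v₁,v₂},u₀)` is an ear, hat, or
double hat with internal vertex set `S` and `G - S` has an odd 4-coloring `φ'`, then
`φ'` extends to a proper 4-coloring of `G` in which every non-isolated vertex other
than `v₁` satisfies the odd condition. -/
theorem two_tree_extension {V : Type*} [Fintype V] [DecidableEq V]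
    (G : SimpleGraph V) (hG : IsKTree 2 G) (v₁ v₂ u₀ : V) (S : Finset V)
    (hB : (S = {u₀} ∧ IsEar2 G v₁ v₂ u₀) ∨
      (∃ u₁ u₂, S = {u₀, u₁, u₂} ∧ IsHat2 G v₁ v₂ u₀ u₁ u₂) ∨
      (∃ u₁ u₂ u₃ u₄ u₅ u₆, S = {u₀, u₁, u₂, u₃, u₄, u₅, u₆} ∧
        IsDoubleHat2 G v₁ v₂ u₀ u₁ u₂ u₃ u₄ u₅ u₆))
    (φ' : V → Fin 4) (hφ' : IsOddColoring (GraphDel G ↑S) 4 φ') :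
    ∃ φ : V → Fin 4, (∀ x ∉ S, φ x = φ' x) ∧ ProperColoring G φ ∧
      ∀ x : V, x ≠ v₁ → (∃ u, G.Adj x u) → OddAt G φ x :=
  two_tree_extension_general G v₁ v₂ u₀ S hB φ' hφ'
end

section
/- Let G be a graph, {v₁,v₂,v₃} a triangle, and u₀, w₀ two vertices with N_G(u₀) = N_G(w₀) = {v₁,v₂,v₃} (a T⁽³⁾_{2,0,0} configuration). If G − {u₀,w₀} admits an odd 5-coloring, then G admits an odd 5-coloring: assign u₀ and w₀ the same color not used on {v₁,v₂,v₃}; then for every vertex x of G−{u₀,w₀} and every color c, the parities of |φ⁻¹(c)∩N_G(x)| and |φ⁻¹(c)∩N_{G−{u₀,w₀}}(x)| agree. -/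
/-!
Give both twins `u₀`, `w₀` one colour that is missing on their common neighbourhood. Every other
vertex is adjacent to both twins or to neither, so it gains an even number of neighbours of a
single colour and all its colour counts keep their parity. The twins themselves see a clique,
which a proper colouring colours injectively, so each colour around them occurs exactly once.
-/

open SimpleGraph Finset
open scoped Classical

namespace SimpleGraph

variable {V : Type*} (G : SimpleGraph V)

lemma not_adj_of_neighborSet_eq {u w : V} (h : G.neighborSet u = G.neighborSet w) :
    ¬G.Adj u w :=
  fun huw => G.loopless.irrefl w (h ▸ huw : w ∈ G.neighborSet w)

lemma isIndepSet_pair_of_neighborSet_eq {u w : V} (h : G.neighborSet u = G.neighborSet w) :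
    G.IsIndepSet {u, w} :=
  Set.pairwise_pair.2 fun _ =>
    ⟨G.not_adj_of_neighborSet_eq h, G.not_adj_of_neighborSet_eq h.symm⟩

end SimpleGraph

lemma ProperColoring.injOn_of_isClique {V α : Type*} {G : SimpleGraph V} {φ : V → α}
    (hφ : ProperColoring G φ) {s : Set V} (hs : G.IsClique s) : Set.InjOn φ s :=
  fun a ha b hb hab => by_contra fun hne => hφ a b (hs ha hb hne) hab

section

variable {V α : Type*} (G : SimpleGraph V)

lemma properColoring_piecewise_of_graphDel {S : Set V} [DecidablePred (· ∈ S)] {φ : V → α}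
    {c₀ : α} (hφ : ProperColoring (GraphDel G S) φ) (hS : G.IsIndepSet S)
    (hc₀ : ∀ a ∈ S, ∀ b, G.Adj a b → φ b ≠ c₀) :
    ProperColoring G (S.piecewise (fun _ => c₀) φ) := by
  intro a b hab
  by_cases ha : a ∈ S <;> by_cases hb : b ∈ S <;>
    simp only [Set.piecewise_eq_of_mem, Set.piecewise_eq_of_notMem, ha, hb, not_false_eq_true]
  · exact absurd hab (hS ha hb (G.ne_of_adj hab))
  · exact (hc₀ a ha b hab).symm
  · exact hc₀ b hb a hab.symm
  · exact hφ a b ⟨hab, ha, hb⟩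

variable [Fintype V]

lemma oddAt_of_injOn_neighborSet {φ : V → α} {v y : V} (hφ : Set.InjOn φ (G.neighborSet v))
    (hy : G.Adj v y) : OddAt G φ v := by
  refine ⟨φ y, ?_⟩
  have : (univ.filter fun u => G.Adj v u ∧ φ u = φ y) = {y} := by
    ext u
    simp only [mem_filter, mem_univ, true_and, mem_singleton]
    exact ⟨fun h => hφ h.1 hy h.2, by rintro rfl; exact ⟨hy, rfl⟩⟩
  simp [colorCount, this]

lemma even_card_adj_pair_of_neighborSet_eq {u w : V} (hne : u ≠ w)
    (h : G.neighborSet u = G.neighborSet w) (x : V) :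
    Even (univ.filter fun s => s ∈ ({u, w} : Set V) ∧ G.Adj x s).card := by
  have hxw : G.Adj x w ↔ G.Adj x u := by
    simpa [SimpleGraph.adj_comm] using (Set.ext_iff.mp h x).symm
  by_cases hx : G.Adj x u
  · have : (univ.filter fun s => s ∈ ({u, w} : Set V) ∧ G.Adj x s) = {u, w} := by
      ext s
      simp only [mem_filter, mem_univ, true_and, Set.mem_insert_iff, Set.mem_singleton_iff,
        mem_insert, mem_singleton]
      exact ⟨And.left, by rintro (rfl | rfl) <;> simp_all⟩
    rw [this, card_pair hne]
    exact even_two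
  · have : (univ.filter fun s => s ∈ ({u, w} : Set V) ∧ G.Adj x s) = ∅ := by
      ext s
      simp only [mem_filter, mem_univ, true_and, Set.mem_insert_iff, Set.mem_singleton_iff,
        notMem_empty, iff_false]
      rintro ⟨rfl | rfl, h⟩ <;> simp_all
    rw [this, card_empty]
    exact ⟨0, rfl⟩

lemma colorCount_eq_graphDel_add {S : Set V} [DecidablePred (· ∈ S)] {x : V} (hx : x ∉ S)
    (φ : V → α) (c : α) :
    colorCount G φ x c = colorCount (GraphDel G S) φ x c +
      (univ.filter fun u => u ∈ S ∧ G.Adj x u ∧ φ u = c).card := by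
  rw [colorCount, colorCount, ← card_filter_add_card_filter_not (p := (· ∉ S)),
    filter_filter, filter_filter]
  congr 2 <;> ext u
  all_goals simp only [mem_filter, mem_univ, true_and, GraphDel, hx, not_false_eq_true, not_not]
  all_goals tauto

lemma colorCount_graphDel_congr {S : Set V} {φ ψ : V → α} (h : ∀ u ∉ S, φ u = ψ u) (x : V)
    (c : α) :
    colorCount (GraphDel G S) φ x c = colorCount (GraphDel G S) ψ x c :=
  congrArg card <| filter_congr fun u _ => and_congr_right fun hxu => by rw [h u hxu.2.2]

lemma odd_colorCount_piecewise_iff {S : Set V} [DecidablePred (· ∈ S)] {x : V} (hx : x ∉ S)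
    (hS : Even (univ.filter fun u => u ∈ S ∧ G.Adj x u).card) (φ : V → α) (c₀ c : α) :
    Odd (colorCount G (S.piecewise (fun _ => c₀) φ) x c) ↔
      Odd (colorCount (GraphDel G S) φ x c) := by
  have hrecolored : Even (univ.filter fun u =>
      u ∈ S ∧ G.Adj x u ∧ S.piecewise (fun _ => c₀) φ u = c).card := by
    rcases eq_or_ne c₀ c with rfl | hc
    · convert hS using 2
      ext u
      simp +contextual [Set.piecewise_eq_of_mem]
    · rw [filter_eq_empty_iff.2 fun u _ ⟨hu, _, hcu⟩ => hc (by simpa [hu] using hcu)]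
      simp
  rw [colorCount_eq_graphDel_add G hx, Nat.odd_add, iff_true_right hrecolored,
    colorCount_graphDel_congr G (φ := S.piecewise (fun _ => c₀) φ) (ψ := φ)
      fun u hu => Set.piecewise_eq_of_notMem _ _ _ hu]

theorem oddColorable_of_graphDel_of_twins {m : ℕ} {u w : V} (hne : u ≠ w)
    (hN : G.neighborSet u = G.neighborSet w) (hcl : G.IsClique (G.neighborSet u))
    (hnt : (G.neighborSet u).Nontrivial) (hm : (G.neighborSet u).ncard < m)
    (h : OddColorable (GraphDel G {u, w}) m) : OddColorable G m := by
  obtain ⟨φ, hφ, hodd⟩ := h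
  set S : Set V := {u, w}
  set N := G.neighborSet u
  have hnbr : ∀ a ∈ S, G.neighborSet a = N := by
    rintro a (rfl | rfl)
    exacts [rfl, hN.symm]
  have hNS : ∀ v ∈ N, v ∉ S := by
    rintro v hv (rfl | rfl)
    exacts [G.loopless.irrefl _ hv, G.not_adj_of_neighborSet_eq hN hv]
  obtain ⟨c₀, hc₀⟩ : ∃ c₀, c₀ ∉ φ '' N := by
    by_contra! hall
    have := Set.ncard_image_le (f := φ) (s := N)
    rw [Set.eq_univ_of_forall hall, Set.ncard_univ, Nat.card_eq_fintype_card,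
      Fintype.card_fin] at this
    omega
  set ψ := S.piecewise (fun _ => c₀) φ
  have hψ : ProperColoring G ψ :=
    properColoring_piecewise_of_graphDel G hφ (G.isIndepSet_pair_of_neighborSet_eq hN)
      fun a ha b hab hb => hc₀ ⟨b, hnbr a ha ▸ hab, hb⟩
  refine ⟨ψ, hψ, fun x ⟨y, hxy⟩ => ?_⟩
  by_cases hx : x ∈ S
  · exact oddAt_of_injOn_neighborSet G (hψ.injOn_of_isClique (hnbr x hx ▸ hcl)) hxy
  obtain ⟨z, hz⟩ : ∃ z, (GraphDel G S).Adj x z := by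
    by_cases hy : y ∈ S
    · have hxN : x ∈ N := hnbr y hy ▸ hxy.symm
      obtain ⟨z, hzN, hzx⟩ := hnt.exists_ne x
      exact ⟨z, hcl hxN hzN hzx.symm, hx, hNS z hzN⟩
    · exact ⟨y, hxy, hx, hy⟩
  obtain ⟨c, hc⟩ := hodd x ⟨z, hz⟩
  exact ⟨c, (odd_colorCount_piecewise_iff G hx
    (even_card_adj_pair_of_neighborSet_eq G hne hN x) φ c₀ c).2 hc⟩

end

/-- Two ears over a common triangle (a `𝓣⁽³⁾_{2,0,0}` configuration):
if `N(u₀) = N(w₀) = {v₁,v₂,v₃}` and `G - {u₀,w₀}` is odd 5-colorable, then so is `G`. -/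
theorem two_ears_reduction {V : Type*} [Fintype V] (G : SimpleGraph V)
    (v₁ v₂ v₃ u₀ w₀ : V)
    (htri : G.Adj v₁ v₂ ∧ G.Adj v₂ v₃ ∧ G.Adj v₁ v₃) (hne : u₀ ≠ w₀)
    (hu : G.neighborSet u₀ = {v₁, v₂, v₃}) (hw : G.neighborSet w₀ = {v₁, v₂, v₃})
    (h : OddColorable (GraphDel G {u₀, w₀}) 5) :
    OddColorable G 5 := by
  have htriangle : G.IsClique ({v₁, v₂, v₃} : Set V) := by
    simp [SimpleGraph.isClique_insert, htri.1, htri.2.1, htri.2.2]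
  have hnt : ({v₁, v₂, v₃} : Set V).Nontrivial :=
    ⟨v₁, by simp, v₂, by simp, G.ne_of_adj htri.1⟩
  have hcard : ({v₁, v₂, v₃} : Set V).ncard < 5 := by
    have := (Set.ncard_insert_le v₁ {v₂, v₃}).trans
      (Nat.succ_le_succ ((Set.ncard_insert_le v₂ {v₃}).trans_eq (by rw [Set.ncard_singleton])))
    omega
  exact oddColorable_of_graphDel_of_twins G hne (hu.trans hw.symm) (hu ▸ htriangle) (hu ▸ hnt)
    (hu ▸ hcard) h
end
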